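/- arXiv:2410.20185 — 14 statements merged into one kernel-verified Lean document; each statement's English description precedes it below -/
import Mathlib

section
/- Let n, k, t be positive integers with k ≥ t+1 and n ≥ (t+1)(k−t+1)². If i and j are positive integers with t ≤ i ≤ j, then (k−t+1)^{j−i} · binom(n−j, k−j) ≤ binom(n−i, k−i). -/
/-! Telescope from `i` to `j`: since `(n - m) * C(n - m - 1, k - m - 1) = (k - m) * C(n - m, k - m)`,
each step `m → m + 1` with `t ≤ m < k` loses the factor `(n - m) / (k - m)`, and the bound on `n`
makes this factor at least `k - t + 1`. For `j > k` the left side vanishes. -/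

theorem Nat.mul_choose_le_choose_succ_succ {a b c : ℕ} (h : c * (b + 1) ≤ a + 1) :
    c * a.choose b ≤ (a + 1).choose (b + 1) := by
  refine Nat.le_of_mul_le_mul_right ?_ b.succ_pos
  calc c * a.choose b * (b + 1) = c * (b + 1) * a.choose b := by ring
    _ ≤ (a + 1) * a.choose b := Nat.mul_le_mul_right _ h
    _ = (a + 1).choose (b + 1) * (b + 1) := a.add_one_mul_choose_eq b

theorem pow_sub_mul_le_of_mul_succ_le {f : ℕ → ℕ} {c i j : ℕ} (hij : i ≤ j)
    (hf : ∀ m, i ≤ m → m < j → c * f (m + 1) ≤ f m) : c ^ (j - i) * f j ≤ f i := by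
  induction j, hij using Nat.le_induction with
  | base => simp
  | succ m hm ih =>
    calc c ^ (m + 1 - i) * f (m + 1) = c ^ (m - i) * (c * f (m + 1)) := by
          rw [← mul_assoc, ← pow_succ, Nat.sub_add_comm hm]
      _ ≤ c ^ (m - i) * f m := Nat.mul_le_mul_left _ (hf m hm (by omega))
      _ ≤ f i := ih fun m' hm' hm'j => hf m' hm' (by omega)

theorem mul_sub_add_le_of_mul_sq_le {n k t m : ℕ}
    (hn : (t + 1) * (k - t + 1) ^ 2 ≤ n) (htm : t ≤ m) (hmk : m < k) :
    (k - t + 1) * (k - m) + m ≤ n := by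
  obtain ⟨d, rfl⟩ : ∃ d, k = m + 1 + d := ⟨k - m - 1, by omega⟩
  obtain ⟨b, rfl⟩ : ∃ b, m = t + b := ⟨m - t, by omega⟩
  rw [show t + b + 1 + d - t = b + 1 + d by omega] at hn ⊢
  rw [show t + b + 1 + d - (t + b) = d + 1 by omega]
  nlinarith [Nat.mul_le_mul_left t (Nat.one_le_pow 2 (b + 1 + d + 1) (by omega))]

theorem mul_choose_sub_succ_le_choose_sub {n k t m : ℕ}
    (hn : (t + 1) * (k - t + 1) ^ 2 ≤ n) (htm : t ≤ m) (hmk : m < k) :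
    (k - t + 1) * (n - (m + 1)).choose (k - (m + 1)) ≤ (n - m).choose (k - m) := by
  have hlen := mul_sub_add_le_of_mul_sq_le hn htm hmk
  have hk : k - m = k - (m + 1) + 1 := by omega
  have hn' : n - m = n - (m + 1) + 1 := by
    have : k - m ≤ (k - t + 1) * (k - m) := Nat.le_mul_of_pos_left _ (by omega)
    omega
  rw [hk, hn']
  exact Nat.mul_choose_le_choose_succ_succ (by rw [← hk, ← hn']; omega)

theorem stmt4_general (n k t i j : ℕ)
    (hnge : (t + 1) * (k - t + 1) ^ 2 ≤ n)
    (hti : t ≤ i) (hij : i ≤ j) :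
    (k - t + 1) ^ (j - i) * (if k < j then 0 else Nat.choose (n - j) (k - j)) ≤
      (if k < i then 0 else Nat.choose (n - i) (k - i)) := by
  by_cases hkj : k < j
  · simp [hkj]
  rw [if_neg hkj, if_neg (by omega)]
  exact pow_sub_mul_le_of_mul_succ_le (f := fun m => (n - m).choose (k - m)) hij
    fun m him hmj => mul_choose_sub_succ_le_choose_sub hnge (hti.trans him) (by omega)

theorem stmt4 (n k t i j : ℕ) (hn : 0 < n) (hk : 0 < k) (ht : 0 < t)
    (hi : 0 < i) (hj : 0 < j)
    (hkt : t + 1 ≤ k) (hnge : (t + 1) * (k - t + 1) ^ 2 ≤ n)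
    (hti : t ≤ i) (hij : i ≤ j) :
    (k - t + 1) ^ (j - i) * (if k < j then 0 else Nat.choose (n - j) (k - j)) ≤
      (if k < i then 0 else Nat.choose (n - i) (k - i)) :=
  stmt4_general n k t i j hnge hti hij
end

section
/- Let n, k, t, s be positive integers with k ≥ t+2 and n ≥ 2(t+1)((k−t+1)² + s). Define f(n,k,t,s,x) = (k−t+1)^{x−t} · binom(x, t) · binom(n−x, k−x) + Σ_{i=0}^{x−t−1} s·(k−t+1)^{i} · binom(x, t). Then for every x ∈ {t+1, t+2, …, k−1}, f(n,k,t,s,x) > f(n,k,t,s,x+1). -/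
open Finset

/-- The function `f(n,k,t,s,x)` from the paper. -/
def fFun (n k t s x : ℕ) : ℕ :=
  (k - t + 1) ^ (x - t) * Nat.choose x t * Nat.choose (n - x) (k - x) +
    (∑ i ∈ Finset.range (x - t), s * (k - t + 1) ^ i) * Nat.choose x t

/-!
With `c = k - t + 1`, drop the geometric part of `f x` to get `f x ≥ c^(x-t) C(x,t) C(n-x,k-x)`.
In `f (x+1)` each factor shrinks or grows by a controlled ratio: `C(x+1,t) ≤ (t+2)/2 · C(x,t)`
because `x + 1 - t ≥ 2`, the geometric sum `∑_{i ≤ x-t} s c^i` is below `2 s c^(x-t)`, and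
`C(n-x-1, k-x-1) = (k-x)/(n-x) · C(n-x, k-x)`. Hence `2 f(x+1) / (c^(x-t) C(x,t))` is at most
`(t+2)(c·C(n-x-1,k-x-1) + 2s)`, and the lower bound on `n` makes this smaller than
`2 C(n-x,k-x)`; the additive `2s` is absorbed since `C(n-x-1,k-x-1) ≥ n-x-1 ≥ 2s` unless
`k = x + 1`.
-/

namespace Nat

theorem self_le_choose {n k : ℕ} (hk : 0 < k) (hkn : k < n) : n ≤ n.choose k := by
  induction n generalizing k with
  | zero => omega
  | succ n ih =>
    obtain ⟨j, rfl⟩ : ∃ j, k = j + 1 := ⟨k - 1, by omega⟩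
    rcases j.eq_zero_or_pos with rfl | hj
    · simp
    · rw [choose_succ_succ']
      have := choose_pos (show j + 1 ≤ n by omega)
      have := ih hj (by omega)
      omega

theorem two_mul_choose_succ_le {x t : ℕ} (h : t < x) :
    2 * (x + 1).choose t ≤ (t + 2) * x.choose t := by
  obtain ⟨d, rfl⟩ : ∃ d, x = t + d + 1 := ⟨x - t - 1, by omega⟩
  have hpascal := choose_mul_succ_eq (t + d + 1) t
  rw [show t + d + 1 + 1 - t = d + 2 by omega] at hpascal
  refine Nat.le_of_mul_le_mul_right (c := d + 2) ?_ (by omega)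
  calc 2 * (t + d + 1 + 1).choose t * (d + 2)
      = 2 * (t + d + 2) * (t + d + 1).choose t := by rw [mul_assoc, ← hpascal]; ring
    _ ≤ (t + 2) * (d + 2) * (t + d + 1).choose t := Nat.mul_le_mul_right _ (by nlinarith)
    _ = (t + 2) * (t + d + 1).choose t * (d + 2) := by ring

theorem geom_sum_range_succ_lt {c : ℕ} (hc : 2 ≤ c) (m : ℕ) :
    ∑ i ∈ range (m + 1), c ^ i < 2 * c ^ m := by
  rw [sum_range_succ, two_mul]
  exact Nat.add_lt_add_right (geomSum_lt hc fun _ ↦ mem_range.mp) _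

end Nat

/- Coordinates `x = t + e`, `k = x + q + 1`, `n = x + p + 1`, in which `k - t + 1 = e + q + 2`
and no truncated subtraction is left in `fFun`. -/
section Shifted

variable {t s e q p : ℕ}

theorem lt_two_mul_succ_of_large (he : 1 ≤ e)
    (hn : 2 * (t + 1) * ((e + q + 2) ^ 2 + s) ≤ t + e + p + 1) :
    (t + 2) * ((q + 1) * (e + q + 3) + 2 * s) < 2 * (p + 1) := by
  have hsq : (q + 1) * (e + q + 3) + 1 ≤ (e + q + 2) ^ 2 := by nlinarith
  have hesq : e + 1 ≤ (e + q + 2) ^ 2 := by nlinarith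
  nlinarith

theorem lt_two_mul_choose_of_large (he : 1 ≤ e)
    (hn : 2 * (t + 1) * ((e + q + 2) ^ 2 + s) ≤ t + e + p + 1) :
    (t + 2) * ((e + q + 2) * p.choose q + 2 * s) < 2 * (p + 1).choose (q + 1) := by
  have hlin := lt_two_mul_succ_of_large he hn
  refine Nat.lt_of_mul_lt_mul_right (a := q + 1) ?_
  rw [mul_assoc 2, ← Nat.add_one_mul_choose_eq]
  rcases q.eq_zero_or_pos with rfl | hq
  · simp only [Nat.choose_zero_right]
    nlinarith
  · have hsmall : (q + 1) * (e + q + 3) + 2 * s < p + 1 := by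
      have := Nat.mul_le_mul_right ((q + 1) * (e + q + 3) + 2 * s) (show 2 ≤ t + 2 by omega)
      omega
    have hqp : q < p := by nlinarith
    have h2s : 2 * s ≤ p.choose q := le_trans (by omega) (Nat.self_le_choose hq hqp)
    have hA := Nat.choose_pos hqp.le
    have hdrop : ((e + q + 2) * p.choose q + 2 * s) * (q + 1) ≤
        (q + 1) * (e + q + 3) * p.choose q := by
      nlinarith [Nat.mul_le_mul_left (q + 1) h2s]
    calc (t + 2) * ((e + q + 2) * p.choose q + 2 * s) * (q + 1)
        ≤ (t + 2) * ((q + 1) * (e + q + 3)) * p.choose q := by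
          rw [mul_assoc, mul_assoc]
          exact Nat.mul_le_mul_left _ hdrop
      _ < 2 * (p + 1) * p.choose q :=
          Nat.mul_lt_mul_of_pos_right
            ((Nat.mul_le_mul_left _ (Nat.le_add_right _ _)).trans_lt hlin) hA
      _ = 2 * ((p + 1) * p.choose q) := by ring

theorem pow_mul_choose_mul_choose_le_fFun :
    (e + q + 2) ^ e * (t + e).choose t * (p + 1).choose (q + 1) ≤
      fFun (t + e + p + 1) (t + e + q + 1) t s (t + e) := by
  rw [fFun, show t + e + q + 1 - t + 1 = e + q + 2 by omega, show t + e - t = e by omega,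
    show t + e + p + 1 - (t + e) = p + 1 by omega, show t + e + q + 1 - (t + e) = q + 1 by omega]
  exact Nat.le_add_right _ _

theorem two_mul_fFun_succ_le (he : 1 ≤ e) :
    2 * fFun (t + e + p + 1) (t + e + q + 1) t s (t + e + 1) ≤
      (t + 2) * ((e + q + 2) * p.choose q + 2 * s) * ((e + q + 2) ^ e * (t + e).choose t) := by
  rw [fFun, show t + e + q + 1 - t + 1 = e + q + 2 by omega, show t + e + 1 - t = e + 1 by omega,
    show t + e + p + 1 - (t + e + 1) = p by omega, show t + e + q + 1 - (t + e + 1) = q by omega]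
  set c := e + q + 2
  have hsum : ∑ i ∈ range (e + 1), s * c ^ i ≤ 2 * s * c ^ e := by
    rw [← mul_sum, mul_comm 2 s, mul_assoc]
    exact Nat.mul_le_mul_left s (Nat.geom_sum_range_succ_lt (by omega) e).le
  have hchoose := Nat.two_mul_choose_succ_le (show t < t + e by omega)
  calc 2 * (c ^ (e + 1) * (t + e + 1).choose t * p.choose q +
        (∑ i ∈ range (e + 1), s * c ^ i) * (t + e + 1).choose t)
      = (c ^ e * c * p.choose q + ∑ i ∈ range (e + 1), s * c ^ i) *
          (2 * (t + e + 1).choose t) := by ring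
    _ ≤ (c ^ e * c * p.choose q + 2 * s * c ^ e) * ((t + 2) * (t + e).choose t) := by
      gcongr
    _ = (t + 2) * (c * p.choose q + 2 * s) * (c ^ e * (t + e).choose t) := by ring

theorem fFun_succ_lt (he : 1 ≤ e) (hn : 2 * (t + 1) * ((e + q + 2) ^ 2 + s) ≤ t + e + p + 1) :
    fFun (t + e + p + 1) (t + e + q + 1) t s (t + e + 1) <
      fFun (t + e + p + 1) (t + e + q + 1) t s (t + e) := by
  have hpos : 0 < (e + q + 2) ^ e * (t + e).choose t :=
    Nat.mul_pos (by positivity) (Nat.choose_pos (by omega))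
  refine Nat.lt_of_mul_lt_mul_left (a := 2) ?_
  calc 2 * fFun (t + e + p + 1) (t + e + q + 1) t s (t + e + 1)
      ≤ (t + 2) * ((e + q + 2) * p.choose q + 2 * s) * ((e + q + 2) ^ e * (t + e).choose t) :=
        two_mul_fFun_succ_le he
    _ < 2 * (p + 1).choose (q + 1) * ((e + q + 2) ^ e * (t + e).choose t) :=
        Nat.mul_lt_mul_of_pos_right (lt_two_mul_choose_of_large he hn) hpos
    _ ≤ 2 * fFun (t + e + p + 1) (t + e + q + 1) t s (t + e) := by
        rw [mul_assoc, mul_comm ((p + 1).choose (q + 1))]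
        exact Nat.mul_le_mul_left 2 pow_mul_choose_mul_choose_le_fFun

end Shifted

theorem stmt5_general (n k t s : ℕ)
    (hnge : 2 * (t + 1) * ((k - t + 1) ^ 2 + s) ≤ n) :
    ∀ x : ℕ, t + 1 ≤ x → x ≤ k - 1 → fFun n k t s (x + 1) < fFun n k t s x := by
  intro x hx hxk
  obtain ⟨e, rfl⟩ : ∃ e, x = t + e := ⟨x - t, by omega⟩
  obtain ⟨q, rfl⟩ : ∃ q, k = t + e + q + 1 := ⟨k - (t + e) - 1, by omega⟩
  rw [show t + e + q + 1 - t + 1 = e + q + 2 by omega] at hnge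
  have hsq : e + 1 ≤ (e + q + 2) ^ 2 := le_trans (by omega) (Nat.le_self_pow two_ne_zero _)
  have hxn : t + e + 1 ≤ n := by nlinarith
  obtain ⟨p, rfl⟩ : ∃ p, n = t + e + p + 1 := ⟨n - (t + e) - 1, by omega⟩
  exact fFun_succ_lt (by omega) hnge

theorem stmt5 (n k t s : ℕ) (hn : 0 < n) (hk : 0 < k) (ht : 0 < t) (hs : 0 < s)
    (hkt : t + 2 ≤ k) (hnge : 2 * (t + 1) * ((k - t + 1) ^ 2 + s) ≤ n) :
    ∀ x : ℕ, t + 1 ≤ x → x ≤ k - 1 → fFun n k t s (x + 1) < fFun n k t s x :=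
  stmt5_general n k t s hnge
end

section
/- Let n, k, t, s be positive integers with k ≥ t+3 and n ≥ 3·binom(t+2, 2)·((k−t+1)² + s). Define g(n,k,t,s,x) = (x−t)·binom(n−t−1, k−t−1) + (k−x+1)(k−t+1)·binom(n−t−2, k−t−2) + t(k−t)·binom(n−x, k−x) + s(k−x+3). Then for every x ∈ {t+2, t+3, …, k−1}, g(n,k,t,s,x) < g(n,k,t,s,x+1). -/
open Finset

/-- The function `g(n,k,t,s,x)` from the paper. -/
def gFun (n k t s x : ℕ) : ℕ :=
  (x - t) * Nat.choose (n - t - 1) (k - t - 1) +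
    (k - x + 1) * (k - t + 1) * Nat.choose (n - t - 2) (k - t - 2) +
    t * (k - t) * Nat.choose (n - x) (k - x) + s * (k - x + 3)

/-!
By Pascal's rule,
`g(x + 1) - g(x) = C(n-t-1, k-t-1) - (k-t+1) C(n-t-2, k-t-2) - t(k-t) C(n-x-1, k-x) - s`.
For `x ≥ t + 2` the binomial `C(n-x-1, k-x)` is at most `C(n-t-2, k-t-2)`, while
`C(n-t-1, k-t-1) = (n-t-1)/(k-t-1) · C(n-t-2, k-t-2)`; the lower bound on `n` makes this ratio
exceed `(k-t+1) + t(k-t)` by enough to also absorb `s`.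
-/

namespace Nat

theorem choose_le_choose_add_add (a b i : ℕ) : a.choose b ≤ (a + i).choose (b + i) := by
  induction i with
  | zero => rfl
  | succ i ih =>
    rw [← Nat.add_assoc, ← Nat.add_assoc, Nat.choose_succ_succ]
    exact ih.trans (Nat.le_add_right _ _)

theorem choose_le_choose_of_le_of_add_le {a b c d : ℕ} (hbd : b ≤ d) (h : a + d ≤ c + b) :
    a.choose b ≤ c.choose d := by
  obtain ⟨i, rfl⟩ := Nat.exists_eq_add_of_le hbd
  exact (choose_le_choose_add_add a b i).trans (Nat.choose_le_choose _ (by omega))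

theorem succ_le_choose_of_lt {K N : ℕ} (h : K < N) : K + 1 ≤ N.choose K := by
  rw [← Nat.choose_symm h.le]
  simpa using choose_le_choose_of_le_of_add_le (a := K + 1) (b := 1) (by omega) (by omega)

/-- `(N + 1).choose (K + 1)` is `(N + 1) / (K + 1)` times `N.choose K`, and `N.choose K ≥ K + 1`
absorbs the additive `s`. -/
theorem mul_choose_add_lt_succ_choose_succ {N K c s : ℕ} (hKN : K < N)
    (h : (K + 1) * c + s < N + 1) : c * N.choose K + s < (N + 1).choose (K + 1) := by
  have hB := succ_le_choose_of_lt hKN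
  refine Nat.lt_of_mul_lt_mul_left (a := K + 1) ?_
  calc (K + 1) * (c * N.choose K + s) = (K + 1) * c * N.choose K + (K + 1) * s := by ring
    _ < (K + 1) * c * N.choose K + (s + 1) * N.choose K := by nlinarith
    _ = ((K + 1) * c + s + 1) * N.choose K := by ring
    _ ≤ (N + 1) * N.choose K := Nat.mul_le_mul_right _ h
    _ = (K + 1) * (N + 1).choose (K + 1) := by rw [Nat.add_one_mul_choose_eq, Nat.mul_comm]

theorem succ_le_choose_two (t : ℕ) : t + 1 ≤ (t + 2).choose 2 := by
  rw [Nat.choose_succ_succ, Nat.choose_one_right]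
  exact Nat.le_add_right _ _

end Nat

theorem gFun_succ_add {n k t s x : ℕ} (htx : t ≤ x) (hxk : x < k) (hxn : x < n) :
    gFun n k t s (x + 1) + ((k - t + 1) * (n - t - 2).choose (k - t - 2) +
      t * (k - t) * (n - x - 1).choose (k - x) + s) =
    gFun n k t s x + (n - t - 1).choose (k - t - 1) := by
  obtain ⟨a, ha⟩ : ∃ a, k - x = a + 1 := ⟨k - x - 1, by omega⟩
  obtain ⟨b, hb⟩ : ∃ b, n - x = b + 1 := ⟨n - x - 1, by omega⟩
  unfold gFun
  rw [show x + 1 - t = x - t + 1 by omega, show k - (x + 1) = a by omega,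
    show n - (x + 1) = b by omega, show n - x - 1 = b by omega, ha, hb, Nat.choose_succ_succ]
  ring

theorem stmt6_general (n k t s : ℕ)
    (hnge : 3 * Nat.choose (t + 2) 2 * ((k - t + 1) ^ 2 + s) ≤ n) :
    ∀ x : ℕ, t + 2 ≤ x → x ≤ k - 1 → gFun n k t s x < gFun n k t s (x + 1) := by
  intro x hx hxk
  have hsize : (k - t - 1) * (k - t + 1 + t * (k - t)) + s < n - t - 1 := by
    obtain ⟨m, rfl⟩ : ∃ m, k = t + 3 + m := ⟨k - t - 3, by omega⟩
    rw [show t + 3 + m - t = m + 3 by omega, show m + 3 - 1 = m + 2 by omega] at *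
    have hn' : 3 * (t + 1) * ((m + 3 + 1) ^ 2 + s) ≤ n :=
      (Nat.mul_le_mul_right _ (Nat.mul_le_mul_left 3 (Nat.succ_le_choose_two t))).trans hnge
    have hbig : (m + 2) * (m + 3 + 1 + t * (m + 3)) + s + t + 1 < n := by nlinarith
    omega
  have hkn : k < n := by
    have := Nat.le_mul_of_pos_right (k - t - 1) (show 0 < k - t + 1 + t * (k - t) by omega)
    omega
  have hB : (n - x - 1).choose (k - x) ≤ (n - t - 2).choose (k - t - 2) :=
    Nat.choose_le_choose_of_le_of_add_le (by omega) (by omega)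
  have hA : (k - t + 1 + t * (k - t)) * (n - t - 2).choose (k - t - 2) + s <
      (n - t - 1).choose (k - t - 1) := by
    have hN : n - t - 2 + 1 = n - t - 1 := by omega
    have hK : k - t - 2 + 1 = k - t - 1 := by omega
    have h := Nat.mul_choose_add_lt_succ_choose_succ (N := n - t - 2) (K := k - t - 2)
      (c := k - t + 1 + t * (k - t)) (s := s) (by omega) (by rwa [hK, hN])
    rwa [hN, hK] at h
  have hstep := gFun_succ_add (s := s) (show t ≤ x by omega) (show x < k by omega)
    (show x < n by omega)
  linarith [Nat.mul_le_mul_left (t * (k - t)) hB]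

theorem stmt6 (n k t s : ℕ) (hn : 0 < n) (hk : 0 < k) (ht : 0 < t) (hs : 0 < s)
    (hkt : t + 3 ≤ k) (hnge : 3 * Nat.choose (t + 2) 2 * ((k - t + 1) ^ 2 + s) ≤ n) :
    ∀ x : ℕ, t + 2 ≤ x → x ≤ k - 1 → gFun n k t s x < gFun n k t s (x + 1) :=
  stmt6_general n k t s hnge
end

section
/- Let n, k, t, s be positive integers with k ≥ t+2 and n ≥ 3·binom(t+2, 2)·((k−t+1)² + s). Let h(n,k,t,s) = |{F ∈ binom([n], k) : [t] ⊆ F and |F ∩ [k+1]| ≥ t+1}| + s + min{t, s}. Then h(n,k,t,s) > (k−t+1)·binom(n−t−1, k−t−1) − binom(k−t+1, 2)·binom(n−t−2, k−t−2) ≥ (17/18)·(k−t+1)·binom(n−t−1, k−t−1). -/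
open Finset

def hFun (n k t s : ℕ) : ℕ :=
  (((Icc 1 n).powersetCard k).filter
    (fun F => Icc 1 t ⊆ F ∧ t + 1 ≤ (F ∩ Icc 1 (k + 1)).card)).card + s + min t s

/-! For `j ≤ k - t`, the sets `[t] ∪ {t + j + 1} ∪ G` with `G` a `(k - t - 1)`-subset of
`(t + j + 1, n]` lie in the family, and different `j` give different sets, since `t + j + 1` is
the least element above `t`. Hence the family has at least
`∑_{j ≤ k-t} C(n-t-1-j, k-t-1)` members. By Pascal's rule each summand falls short of
`C(n-t-1, k-t-1)` by at most `j · C(n-t-2, k-t-2)`, and `∑_{j ≤ k-t} j = C(k-t+1, 2)`; adding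
`s ≥ 1` gives the strict bound. The second bound reduces, via
`(k-t-1) · C(n-t-1, k-t-1) = (n-t-1) · C(n-t-2, k-t-2)`, to `9 (k-t) (k-t-1) ≤ n-t-1`. -/

theorem choose_add_le_choose_add_mul (a d r : ℕ) :
    (a + d).choose (r + 1) ≤ a.choose (r + 1) + d * (a + d - 1).choose r := by
  induction d with
  | zero => simp
  | succ d ih =>
    have hmono : (a + d - 1).choose r ≤ (a + d).choose r := Nat.choose_le_choose r (by omega)
    calc (a + (d + 1)).choose (r + 1) = (a + d).choose r + (a + d).choose (r + 1) :=
          Nat.choose_succ_succ' (a + d) r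
      _ ≤ (a + d).choose r + (a.choose (r + 1) + d * (a + d - 1).choose r) :=
          Nat.add_le_add_left ih _
      _ ≤ a.choose (r + 1) + (d + 1) * (a + (d + 1) - 1).choose r := by
          rw [show a + (d + 1) - 1 = a + d by omega]
          nlinarith

theorem mul_choose_le_sum_choose_sub_add {N q : ℕ} (r : ℕ) (hq : q ≤ N + 1) :
    q * N.choose (r + 1) ≤
      ∑ j ∈ range q, (N - j).choose (r + 1) + q.choose 2 * (N - 1).choose r := by
  have hstep (j : ℕ) (hj : j ≤ N) :
      N.choose (r + 1) ≤ (N - j).choose (r + 1) + j * (N - 1).choose r := by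
    simpa [Nat.sub_add_cancel hj] using choose_add_le_choose_add_mul (N - j) j r
  calc q * N.choose (r + 1) = ∑ _j ∈ range q, N.choose (r + 1) := by simp
    _ ≤ ∑ j ∈ range q, ((N - j).choose (r + 1) + j * (N - 1).choose r) :=
        sum_le_sum fun j hj => hstep j (by rw [mem_range] at hj; omega)
    _ = _ := by rw [sum_add_distrib, ← sum_mul, sum_range_id, Nat.choose_two_right]

theorem mul_choose_pred_le_choose_succ {N m c : ℕ} (h : c * (m + 1) ≤ N) :
    c * (N - 1).choose m ≤ N.choose (m + 1) := by
  cases N with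
  | zero => simp_all
  | succ M =>
    refine Nat.le_of_mul_le_mul_right (c := m + 1) ?_ m.succ_pos
    calc c * (M + 1 - 1).choose m * (m + 1) = c * (m + 1) * M.choose m := by simp; ring
      _ ≤ (M + 1) * M.choose m := Nat.mul_le_mul_right _ h
      _ = (M + 1).choose (m + 1) * (m + 1) := Nat.add_one_mul_choose_eq M m

theorem card_filter_powersetCard_inter_eq {α : Type*} [DecidableEq α] {A B S : Finset α}
    {k : ℕ} (hAB : Disjoint A B) (hSA : S ⊆ A) (hSk : #S ≤ k) :
    #{F ∈ (A ∪ B).powersetCard k | F ∩ A = S} = (#B).choose (k - #S) := by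
  have hSB : Disjoint S B := hAB.mono_left hSA
  rw [← card_powersetCard]
  refine card_bij' (fun F _ => F \ A) (fun G _ => S ∪ G) ?_ ?_ ?_ ?_
  · intro F hF
    simp only [mem_filter, mem_powersetCard] at hF ⊢
    obtain ⟨⟨hFAB, hFk⟩, hFA⟩ := hF
    exact ⟨sdiff_le_iff.2 hFAB, by rw [card_sdiff, inter_comm, hFA, hFk]⟩
  · intro G hG
    simp only [mem_filter, mem_powersetCard] at hG ⊢
    have hGA : Disjoint G A := (hAB.mono_right hG.1).symm
    refine ⟨⟨union_subset_union hSA hG.1, ?_⟩, ?_⟩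
    · rw [card_union_of_disjoint (hSB.mono_right hG.1), hG.2]; omega
    · rw [union_inter_distrib_right, inter_eq_left.2 hSA, disjoint_iff_inter_eq_empty.1 hGA,
        union_empty]
  · intro F hF
    simp only [mem_filter] at hF
    rw [← hF.2, union_comm, sdiff_union_inter]
  · intro G hG
    simp only [mem_powersetCard] at hG
    rw [union_sdiff_distrib, sdiff_eq_empty_iff_subset.2 hSA, empty_union,
      sdiff_eq_self_of_disjoint (hAB.mono_right hG.1).symm]

theorem sum_choose_le_card_filter_powersetCard {n k t : ℕ} (htk : t < k) (hkn : k + 1 ≤ n) :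
    ∑ j ∈ range (k - t + 1), (n - t - 1 - j).choose (k - t - 1) ≤
      #{F ∈ (Icc 1 n).powersetCard k | Icc 1 t ⊆ F ∧ t + 1 ≤ #(F ∩ Icc 1 (k + 1))} := by
  -- `P j`: the `k`-sets whose least element above `t` is `t + j + 1`, and which contain `[t]`
  set P : ℕ → Finset (Finset ℕ) := fun j =>
    {F ∈ (Icc 1 n).powersetCard k | F ∩ Icc 1 (t + j + 1) = insert (t + j + 1) (Icc 1 t)}
  have hS_card (j : ℕ) : #(insert (t + j + 1) (Icc 1 t)) = t + 1 := by
    rw [card_insert_of_notMem (by simp), Nat.card_Icc, Nat.add_sub_cancel]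
  have hP_card : ∀ j ∈ range (k - t + 1), #(P j) = (n - t - 1 - j).choose (k - t - 1) := by
    intro j hj
    rw [mem_range] at hj
    have hIcc : Icc 1 (t + j + 1) ∪ Ioc (t + j + 1) n = Icc 1 n := by
      ext x; simp only [mem_union, mem_Icc, mem_Ioc]; omega
    have hdisj : Disjoint (Icc 1 (t + j + 1)) (Ioc (t + j + 1) n) := by
      rw [disjoint_left]; intro x; simp only [mem_Icc, mem_Ioc]; omega
    have hSA : insert (t + j + 1) (Icc 1 t) ⊆ Icc 1 (t + j + 1) := by
      intro x; simp only [mem_insert, mem_Icc]; omega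
    simp only [P, ← hIcc]
    rw [card_filter_powersetCard_inter_eq hdisj hSA (by rw [hS_card]; omega), hS_card,
      Nat.card_Ioc]
    congr 1; omega
  have hP_mem (j : ℕ) (F : Finset ℕ) (hF : F ∈ P j) : t + j + 1 ∈ F := by
    simp only [P, mem_filter] at hF
    exact mem_of_mem_inter_left (hF.2 ▸ mem_insert_self _ _)
  have hP_min (j : ℕ) (F : Finset ℕ) (hF : F ∈ P j) (x : ℕ) (hx : x ∈ F) (htx : t < x) :
      t + j + 1 ≤ x := by
    simp only [P, mem_filter] at hF
    by_contra! hxj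
    have : x ∈ insert (t + j + 1) (Icc 1 t) := by
      rw [← hF.2, mem_inter, mem_Icc]
      exact ⟨hx, by omega, hxj.le⟩
    simp only [mem_insert, mem_Icc] at this
    omega
  have hP_disj : (range (k - t + 1) : Set ℕ).PairwiseDisjoint P := by
    intro i _ j _ hij
    rw [Function.onFun, disjoint_left]
    intro F hFi hFj
    have := hP_min i F hFi _ (hP_mem j F hFj) (by omega)
    have := hP_min j F hFj _ (hP_mem i F hFi) (by omega)
    omega
  have hP_sub : (range (k - t + 1)).biUnion P ⊆
      {F ∈ (Icc 1 n).powersetCard k | Icc 1 t ⊆ F ∧ t + 1 ≤ #(F ∩ Icc 1 (k + 1))} := by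
    intro F hF
    obtain ⟨j, hj, hFj⟩ := mem_biUnion.1 hF
    simp only [P, mem_filter, mem_range] at hFj hj ⊢
    obtain ⟨hF_mem, hF_inter⟩ := hFj
    refine ⟨hF_mem, (subset_insert _ _).trans (hF_inter ▸ inter_subset_left), ?_⟩
    calc t + 1 = #(F ∩ Icc 1 (t + j + 1)) := by rw [hF_inter, hS_card]
      _ ≤ #(F ∩ Icc 1 (k + 1)) :=
        card_le_card (inter_subset_inter_left (Icc_subset_Icc_right (by omega)))
  calc ∑ j ∈ range (k - t + 1), (n - t - 1 - j).choose (k - t - 1)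
      = ∑ j ∈ range (k - t + 1), #(P j) := (sum_congr rfl hP_card).symm
    _ = #((range (k - t + 1)).biUnion P) := (card_biUnion hP_disj).symm
    _ ≤ _ := card_le_card hP_sub

theorem stmt7_general (n k t s : ℕ) (ht : 0 < t) (hs : 0 < s)
    (hkt : t + 2 ≤ k) (hnge : 3 * Nat.choose (t + 2) 2 * ((k - t + 1) ^ 2 + s) ≤ n) :
    ((k - t + 1) * Nat.choose (n - t - 1) (k - t - 1) : ℤ) -
        (Nat.choose (k - t + 1) 2 : ℤ) * (Nat.choose (n - t - 2) (k - t - 2) : ℤ) <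
      (hFun n k t s : ℤ) ∧
    17 * ((k - t + 1) * Nat.choose (n - t - 1) (k - t - 1) : ℤ) ≤
      18 * (((k - t + 1) * Nat.choose (n - t - 1) (k - t - 1) : ℤ) -
        (Nat.choose (k - t + 1) 2 : ℤ) * (Nat.choose (n - t - 2) (k - t - 2) : ℤ)) := by
  obtain ⟨m, rfl⟩ : ∃ m, k = t + m + 2 := ⟨k - t - 2, by omega⟩
  simp only [show t + m + 2 - t + 1 = m + 3 by omega, show t + m + 2 - t - 1 = m + 1 by omega,
    show t + m + 2 - t - 2 = m by omega, show n - t - 2 = n - t - 1 - 1 by omega] at hnge ⊢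
  have hchoose : t + 2 ≤ (t + 2).choose 2 := by
    have h : (t + 2).choose 2 = (t + 1) + (t + 1).choose 2 := by
      rw [Nat.choose_succ_succ', Nat.choose_one_right]
    have := Nat.choose_pos (show 2 ≤ t + 1 by omega)
    omega
  have hN : 9 * ((m + 2) * (m + 1)) ≤ n - t - 1 := by
    have h1 : 9 * (m + 3) ^ 2 + (t + 1) ≤ 3 * (t + 2).choose 2 * ((m + 3) ^ 2 + s) := by
      nlinarith
    have h2 : 9 * ((m + 2) * (m + 1)) ≤ 9 * (m + 3) ^ 2 := by nlinarith
    omega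
  have hm : m + 2 ≤ (m + 2) * (m + 1) := Nat.le_mul_of_pos_right _ m.succ_pos
  have hfam := sum_choose_le_card_filter_powersetCard (n := n) (k := t + m + 2) (t := t)
    (by omega) (by omega)
  simp only [show t + m + 2 - t + 1 = m + 3 by omega, show t + m + 2 - t - 1 = m + 1 by omega]
    at hfam
  have hh : #{F ∈ (Icc 1 n).powersetCard (t + m + 2) |
      Icc 1 t ⊆ F ∧ t + 1 ≤ #(F ∩ Icc 1 (t + m + 2 + 1))} + 1 ≤ hFun n (t + m + 2) t s := by
    unfold hFun; omega
  have hsum := mul_choose_le_sum_choose_sub_add (N := n - t - 1) (q := m + 3) m (by omega)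
  have hratio : 18 * ((m + 3).choose 2 * (n - t - 1 - 1).choose m) ≤
      (m + 3) * (n - t - 1).choose (m + 1) := by
    have hC2 : (m + 3).choose 2 * 2 = (m + 3) * (m + 2) := by
      rw [Nat.choose_two_right, Nat.div_mul_cancel (Nat.even_mul_pred_self _).two_dvd]; rfl
    calc 18 * ((m + 3).choose 2 * (n - t - 1 - 1).choose m)
        = (m + 3) * (9 * (m + 2) * (n - t - 1 - 1).choose m) := by
          rw [show 18 * ((m + 3).choose 2 * (n - t - 1 - 1).choose m) =
            9 * ((m + 3).choose 2 * 2) * (n - t - 1 - 1).choose m by ring, hC2]; ring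
      _ ≤ (m + 3) * (n - t - 1).choose (m + 1) :=
        Nat.mul_le_mul_left _ (mul_choose_pred_le_choose_succ (by rwa [mul_assoc]))
  zify at hfam hsum hratio hh
  push_cast
  constructor <;> linarith

theorem stmt7 (n k t s : ℕ) (hn : 0 < n) (hk : 0 < k) (ht : 0 < t) (hs : 0 < s)
    (hkt : t + 2 ≤ k) (hnge : 3 * Nat.choose (t + 2) 2 * ((k - t + 1) ^ 2 + s) ≤ n) :
    ((k - t + 1) * Nat.choose (n - t - 1) (k - t - 1) : ℤ) -
        (Nat.choose (k - t + 1) 2 : ℤ) * (Nat.choose (n - t - 2) (k - t - 2) : ℤ) <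
      (hFun n k t s : ℤ) ∧
    17 * ((k - t + 1) * Nat.choose (n - t - 1) (k - t - 1) : ℤ) ≤
      18 * (((k - t + 1) * Nat.choose (n - t - 1) (k - t - 1) : ℤ) -
        (Nat.choose (k - t + 1) 2 : ℤ) * (Nat.choose (n - t - 2) (k - t - 2) : ℤ)) :=
  stmt7_general n k t s ht hs hkt hnge
end

section
/- Let n, k, t, s be positive integers with k ≥ t+1 and n ≥ 2k−t+s. Let 𝒜 be an s-element subset of {F ∈ binom([n], k) : F ∩ [k+1] = [t]} and let ℬ be a min{t, s}-element subset of {F ∈ binom([k+1], k) : [t] ⊄ F}. Then the family {F ∈ binom([n], k) : [t] ⊆ F and |F ∩ [k+1]| ≥ t+1} ∪ 𝒜 ∪ ℬ is s-almost t-intersecting but not t-intersecting. -/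
/-!
Every member of the first family and of `𝓐` contains `[t]`, so these pairwise `t`-intersect.
A member of `𝓑` misses exactly one point of `[k+1]`, so it meets a member of the first family
in at least `t` points and another member of `𝓑` in at least `k - 1 ≥ t` points. Hence a member
of `𝓑` can only fail to `t`-intersect members of `𝓐` (at most `s` of them), and any other member
only members of `𝓑` (at most `min t s` of them). Finally a member `A` of `𝓐` and `B` of `𝓑` meet
inside `[t] ∩ B ⊊ [t]`.
-/

open Finset

/-- A family is `s`-almost `t`-intersecting if each member has at most `s`
members of the family meeting it in fewer than `t` elements. -/
def almostIntersecting (s t : ℕ) (𝓕 : Finset (Finset ℕ)) : Prop :=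
  ∀ F ∈ 𝓕, (𝓕.filter (fun F' => (F' ∩ F).card < t)).card ≤ s

/-- A family is `t`-intersecting if any two members meet in at least `t` elements. -/
def tIntersecting (t : ℕ) (𝓕 : Finset (Finset ℕ)) : Prop :=
  ∀ F ∈ 𝓕, ∀ F' ∈ 𝓕, t ≤ (F ∩ F').card

section Counting

variable {α : Type*} [DecidableEq α]

theorem card_inter_le_card_inter_add_card_sdiff (F B K : Finset α) :
    #(F ∩ K) ≤ #(F ∩ B) + #(K \ B) := by
  refine (card_le_card fun x hx => ?_).trans (card_union_le _ _)
  rw [mem_inter] at hx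
  by_cases hxB : x ∈ B
  · exact mem_union_left _ (mem_inter.mpr ⟨hx.1, hxB⟩)
  · exact mem_union_right _ (mem_sdiff.mpr ⟨hx.2, hxB⟩)

theorem card_add_card_le_card_inter_add_card {B B' K : Finset α} (hB : B ⊆ K) (hB' : B' ⊆ K) :
    #B + #B' ≤ #(B ∩ B') + #K := by
  rw [← card_union_add_card_inter]
  have := card_le_card (union_subset hB hB')
  omega

theorem card_inter_lt_of_inter_eq_of_not_subset {A B K T : Finset α} (hA : A ∩ K = T)
    (hB : B ⊆ K) (hTB : ¬ T ⊆ B) : #(A ∩ B) < #T := by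
  have hAB : A ∩ B ⊆ T ∩ B := fun x hx => by
    rw [mem_inter] at hx ⊢
    exact ⟨hA ▸ mem_inter.mpr ⟨hx.1, hB hx.2⟩, hx.2⟩
  have hTB' : T ∩ B ⊂ T := Finset.ssubset_iff_subset_ne.mpr
    ⟨inter_subset_left, fun h => hTB (h ▸ inter_subset_right)⟩
  exact (card_le_card hAB).trans_lt (card_lt_card hTB')

end Counting

theorem tIntersecting_of_forall_subset {t : ℕ} {𝓕 : Finset (Finset ℕ)} {T : Finset ℕ}
    (hT : t ≤ #T) (h : ∀ F ∈ 𝓕, T ⊆ F) : tIntersecting t 𝓕 :=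
  fun F hF F' hF' => hT.trans (card_le_card (subset_inter (h F hF) (h F' hF')))

theorem almostIntersecting_union_union {s t : ℕ} {𝓖 𝓐 𝓑 : Finset (Finset ℕ)}
    (h𝓖𝓐 : tIntersecting t (𝓖 ∪ 𝓐)) (h𝓑 : tIntersecting t 𝓑)
    (h𝓖𝓑 : ∀ G ∈ 𝓖, ∀ B ∈ 𝓑, t ≤ #(G ∩ B)) (h𝓐card : #𝓐 ≤ s) (h𝓑card : #𝓑 ≤ s) :
    almostIntersecting s t (𝓖 ∪ 𝓐 ∪ 𝓑) := by
  intro F hF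
  rcases mem_union.mp hF with hF | hF
  · refine (card_le_card fun F' hF' => ?_).trans h𝓑card
    obtain ⟨hF'mem, hlt⟩ := mem_filter.mp hF'
    rcases mem_union.mp hF'mem with h | h
    · exact absurd (h𝓖𝓐 F' h F hF) (by omega)
    · exact h
  · refine (card_le_card fun F' hF' => ?_).trans h𝓐card
    obtain ⟨hF'mem, hlt⟩ := mem_filter.mp hF'
    rcases mem_union.mp hF'mem with h | h
    · rcases mem_union.mp h with h | h
      · exact absurd (h𝓖𝓑 F' h F hF) (by omega)
      · exact h
    · exact absurd (h𝓑 F' h F hF) (by omega)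

theorem stmt8_general (n k t s : ℕ) (ht : 0 < t) (hs : 0 < s)
    (hkt : t + 1 ≤ k)
    (𝓐 : Finset (Finset ℕ))
    (h𝓐 : 𝓐 ⊆ ((Icc 1 n).powersetCard k).filter (fun F => F ∩ Icc 1 (k + 1) = Icc 1 t))
    (h𝓐card : 𝓐.card = s)
    (𝓑 : Finset (Finset ℕ))
    (h𝓑 : 𝓑 ⊆ ((Icc 1 (k + 1)).powersetCard k).filter (fun F => ¬ Icc 1 t ⊆ F))
    (h𝓑card : 𝓑.card = min t s) :
    almostIntersecting s t
      ((((Icc 1 n).powersetCard k).filter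
        (fun F => Icc 1 t ⊆ F ∧ t + 1 ≤ (F ∩ Icc 1 (k + 1)).card)) ∪ 𝓐 ∪ 𝓑) ∧
    ¬ tIntersecting t
      ((((Icc 1 n).powersetCard k).filter
        (fun F => Icc 1 t ⊆ F ∧ t + 1 ≤ (F ∩ Icc 1 (k + 1)).card)) ∪ 𝓐 ∪ 𝓑) := by
  have hT : #(Icc 1 t) = t := by simp
  have hK : #(Icc 1 (k + 1)) = k + 1 := by simp
  have mem𝓐 (A) (hA : A ∈ 𝓐) := (mem_filter.mp (h𝓐 hA)).2
  have mem𝓑 (B) (hB : B ∈ 𝓑) : B ⊆ Icc 1 (k + 1) ∧ #B = k ∧ ¬ Icc 1 t ⊆ B := by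
    simpa only [mem_filter, mem_powersetCard, and_assoc] using h𝓑 hB
  refine ⟨almostIntersecting_union_union ?_ ?_ ?_ h𝓐card.le
    (h𝓑card ▸ min_le_right t s), ?_⟩
  · refine tIntersecting_of_forall_subset hT.ge ?_
    intro F hF
    rcases mem_union.mp hF with hF | hF
    · exact (mem_filter.mp hF).2.1
    · exact mem𝓐 F hF ▸ inter_subset_left
  · intro B hB B' hB'
    obtain ⟨hBK, hBcard, -⟩ := mem𝓑 B hB
    obtain ⟨hB'K, hB'card, -⟩ := mem𝓑 B' hB'
    have := card_add_card_le_card_inter_add_card hBK hB'K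
    omega
  · intro F hF B hB
    have hFK := (mem_filter.mp hF).2.2
    have := card_inter_le_card_inter_add_card_sdiff F B (Icc 1 (k + 1))
    rw [card_sdiff_of_subset (mem𝓑 B hB).1, hK, (mem𝓑 B hB).2.1] at this
    omega
  · intro hInt
    obtain ⟨A, hA⟩ := card_pos.mp (h𝓐card ▸ hs)
    obtain ⟨B, hB⟩ := card_pos.mp (h𝓑card ▸ lt_min ht hs)
    obtain ⟨hBK, -, hTB⟩ := mem𝓑 B hB
    have hlt := card_inter_lt_of_inter_eq_of_not_subset (mem𝓐 A hA) hBK hTB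
    have hle := hInt A (mem_union_left _ (mem_union_right _ hA)) B (mem_union_right _ hB)
    omega

theorem stmt8 (n k t s : ℕ) (hn : 0 < n) (hk : 0 < k) (ht : 0 < t) (hs : 0 < s)
    (hkt : t + 1 ≤ k) (hnge : 2 * k - t + s ≤ n)
    (𝓐 : Finset (Finset ℕ))
    (h𝓐 : 𝓐 ⊆ ((Icc 1 n).powersetCard k).filter (fun F => F ∩ Icc 1 (k + 1) = Icc 1 t))
    (h𝓐card : 𝓐.card = s)
    (𝓑 : Finset (Finset ℕ))
    (h𝓑 : 𝓑 ⊆ ((Icc 1 (k + 1)).powersetCard k).filter (fun F => ¬ Icc 1 t ⊆ F))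
    (h𝓑card : 𝓑.card = min t s) :
    almostIntersecting s t
      ((((Icc 1 n).powersetCard k).filter
        (fun F => Icc 1 t ⊆ F ∧ t + 1 ≤ (F ∩ Icc 1 (k + 1)).card)) ∪ 𝓐 ∪ 𝓑) ∧
    ¬ tIntersecting t
      ((((Icc 1 n).powersetCard k).filter
        (fun F => Icc 1 t ⊆ F ∧ t + 1 ≤ (F ∩ Icc 1 (k + 1)).card)) ∪ 𝓐 ∪ 𝓑) :=
  stmt8_general n k t s ht hs hkt 𝓐 h𝓐 h𝓐card 𝓑 h𝓑 h𝓑card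
end

section
/- Let n, k, t, s, h be positive integers with k ≥ t+1 and n ≥ 2k. Suppose ℱ ⊆ binom([n], k) is an s-almost t-intersecting family and H is an h-element subset of [n]. If there exists F ∈ ℱ with |F ∩ H| = m < t, then there exists an (h+t−m)-element subset R of [n] with H ⊆ R such that |ℱ_H| ≤ (k−t+1)^{t−m} · |ℱ_R| + s. -/
/-!
Fix `F ∈ 𝓕` with `|F ∩ H| = m < t`. Every `F' ∈ 𝓕_H` either meets `F` in fewer than `t`
elements (at most `s` such sets) or contains `H ∪ T` for some `(t - m)`-subset `T` of `F \ H`.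
There are `(k - m).choose (t - m) ≤ (k - t + 1) ^ (t - m)` such `T`, and taking `R = H ∪ T` for
the `T` with the largest `|𝓕_{H ∪ T}|` gives the bound.
-/

open Finset

theorem Nat.add_choose_le_pow (c b : ℕ) : (c + b).choose b ≤ (c + 1) ^ b := by
  induction b with
  | zero => simp
  | succ b ih =>
    -- `(c + b + 1) / (b + 1) ≤ c + 1` is the factor gained in each step
    have hstep : (c + b + 1) * (c + b).choose b ≤ (c + 1) ^ (b + 1) * (b + 1) :=
      calc (c + b + 1) * (c + b).choose b
          ≤ (c + b + 1) * (c + 1) ^ b := Nat.mul_le_mul_left _ ih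
        _ ≤ (c + 1) * (b + 1) * (c + 1) ^ b := Nat.mul_le_mul_right _ (by nlinarith)
        _ = (c + 1) ^ (b + 1) * (b + 1) := by ring
    rw [Nat.add_one_mul_choose_eq] at hstep
    rw [← Nat.add_assoc]
    exact Nat.le_of_mul_le_mul_right hstep b.succ_pos

section

variable {α : Type*} [DecidableEq α]

theorem Finset.exists_subset_sdiff_of_le_card_inter {H F F' : Finset α} {t : ℕ}
    (hHF' : H ⊆ F') (ht : t ≤ #(F' ∩ F)) :
    ∃ T ∈ (F \ H).powersetCard (t - #(F ∩ H)), H ∪ T ⊆ F' := by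
  set U := (F' ∩ F) \ (F ∩ H)
  have hU : t - #(F ∩ H) ≤ #U := (Nat.sub_le_sub_right ht _).trans (le_card_sdiff _ _)
  obtain ⟨T, hTU, hTcard⟩ := exists_subset_card_eq hU
  have hUF : U ⊆ F \ H := fun x hx => by
    simp only [U, mem_sdiff, mem_inter] at hx ⊢
    tauto
  have hUF' : U ⊆ F' := sdiff_subset.trans inter_subset_left
  exact ⟨T, mem_powersetCard.2 ⟨hTU.trans hUF, hTcard⟩,
    union_subset hHF' (hTU.trans hUF')⟩

theorem Finset.card_filter_superset_le_sum (𝓕 : Finset (Finset α)) (H F : Finset α)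
    (t : ℕ) :
    #{F' ∈ 𝓕 | H ⊆ F'} ≤ #{F' ∈ 𝓕 | #(F' ∩ F) < t} +
      ∑ T ∈ (F \ H).powersetCard (t - #(F ∩ H)), #{F' ∈ 𝓕 | H ∪ T ⊆ F'} := by
  have hcover : {F' ∈ 𝓕 | H ⊆ F'} ⊆ {F' ∈ 𝓕 | #(F' ∩ F) < t} ∪
      ((F \ H).powersetCard (t - #(F ∩ H))).biUnion fun T => {F' ∈ 𝓕 | H ∪ T ⊆ F'} := by
    intro F' hF'
    obtain ⟨hF'𝓕, hHF'⟩ := mem_filter.1 hF'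
    by_cases hlt : #(F' ∩ F) < t
    · exact mem_union_left _ (mem_filter.2 ⟨hF'𝓕, hlt⟩)
    · obtain ⟨T, hT, hTF'⟩ := exists_subset_sdiff_of_le_card_inter hHF' (not_lt.1 hlt)
      exact mem_union_right _ (mem_biUnion.2 ⟨T, hT, mem_filter.2 ⟨hF'𝓕, hTF'⟩⟩)
  exact (card_le_card hcover).trans <|
    (card_union_le _ _).trans <| Nat.add_le_add_left card_biUnion_le _

theorem Finset.exists_card_filter_superset_le (𝓕 : Finset (Finset α))
    {H F : Finset α} {t : ℕ} (hd : t - #(F ∩ H) ≤ #(F \ H)) :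
    ∃ T ∈ (F \ H).powersetCard (t - #(F ∩ H)), #{F' ∈ 𝓕 | H ⊆ F'} ≤
      #{F' ∈ 𝓕 | #(F' ∩ F) < t} +
        (#(F \ H)).choose (t - #(F ∩ H)) * #{F' ∈ 𝓕 | H ∪ T ⊆ F'} := by
  set S := (F \ H).powersetCard (t - #(F ∩ H))
  have hS : S.Nonempty := powersetCard_nonempty.2 hd
  obtain ⟨T, hT, hTmax⟩ := exists_max_image S (fun T => #{F' ∈ 𝓕 | H ∪ T ⊆ F'}) hS
  refine ⟨T, hT, (card_filter_superset_le_sum 𝓕 H F t).trans (Nat.add_le_add_left ?_ _)⟩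
  rw [← card_powersetCard, ← smul_eq_mul]
  exact sum_le_card_nsmul _ _ _ hTmax

end

theorem stmt9_general (n k t s h m : ℕ) (hkt : t + 1 ≤ k)
    (𝓕 : Finset (Finset ℕ)) (h𝓕 : 𝓕 ⊆ (Icc 1 n).powersetCard k)
    (hai : almostIntersecting s t 𝓕)
    (H : Finset ℕ) (hH : H ∈ (Icc 1 n).powersetCard h)
    (hm : m < t) (hex : ∃ F ∈ 𝓕, (F ∩ H).card = m) :
    ∃ R ∈ (Icc 1 n).powersetCard (h + t - m), H ⊆ R ∧
      (𝓕.filter (fun F => H ⊆ F)).card ≤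
        (k - t + 1) ^ (t - m) * (𝓕.filter (fun F => R ⊆ F)).card + s := by
  obtain ⟨F, hF, hFH⟩ := hex
  obtain ⟨hFn, hFk⟩ := mem_powersetCard.1 (h𝓕 hF)
  obtain ⟨hHn, hHh⟩ := mem_powersetCard.1 hH
  have hFsdiff : #(F \ H) = (k - t) + (t - m) := by
    have := card_sdiff_add_card_inter F H
    omega
  obtain ⟨T, hT, hbound⟩ :=
    exists_card_filter_superset_le 𝓕 (H := H) (F := F) (t := t) (by omega)
  rw [hFH] at hT hbound
  rw [hFsdiff] at hbound
  obtain ⟨hTF, hTcard⟩ := mem_powersetCard.1 hT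
  have hHT : Disjoint H T := disjoint_of_subset_right hTF disjoint_sdiff
  have hRn : H ∪ T ⊆ Icc 1 n := union_subset hHn (hTF.trans (sdiff_subset.trans hFn))
  refine ⟨H ∪ T, mem_powersetCard.2 ⟨hRn, ?_⟩, subset_union_left, ?_⟩
  · rw [card_union_of_disjoint hHT, hHh, hTcard]
    omega
  · rw [Nat.add_comm _ s]
    exact hbound.trans <|
      Nat.add_le_add (hai F hF) (Nat.mul_le_mul_right _ (Nat.add_choose_le_pow _ _))

theorem stmt9 (n k t s h m : ℕ) (hn : 0 < n) (hk : 0 < k) (ht : 0 < t) (hs : 0 < s)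
    (hh : 0 < h) (hkt : t + 1 ≤ k) (hnge : 2 * k ≤ n)
    (𝓕 : Finset (Finset ℕ)) (h𝓕 : 𝓕 ⊆ (Icc 1 n).powersetCard k)
    (hai : almostIntersecting s t 𝓕)
    (H : Finset ℕ) (hH : H ∈ (Icc 1 n).powersetCard h)
    (hm : m < t) (hex : ∃ F ∈ 𝓕, (F ∩ H).card = m) :
    ∃ R ∈ (Icc 1 n).powersetCard (h + t - m), H ⊆ R ∧
      (𝓕.filter (fun F => H ⊆ F)).card ≤
        (k - t + 1) ^ (t - m) * (𝓕.filter (fun F => R ⊆ F)).card + s :=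
  stmt9_general n k t s h m hkt 𝓕 h𝓕 hai H hH hm hex
end

section
/- Let n, k, t, s be positive integers with k ≥ t+1 and n ≥ (t+1)(k−t+1)². Suppose ℱ ⊆ binom([n], k) is an s-almost t-intersecting family whose t-covering number τ satisfies t+1 ≤ τ ≤ k. If H is a subset of [n] with |H| < τ, then |ℱ_H| ≤ (k−t+1)^{τ−|H|} · binom(n−τ, k−τ) + Σ_{i=0}^{τ−|H|−1} s·(k−t+1)^{i}. -/
/-!
Induction on `τ - |H|`. If `|H| = τ`, the members through `H` are determined by their remaining
`k - τ` points. If `|H| < τ`, then `H` is not a `t`-cover, so some member `F₀` meets `H` in fewer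
than `t` points; pick `B ⊆ F₀ \ H` with `|B| ≤ k - t + 1` and `|F₀ \ B| < t`. A member through `H`
either meets `F₀` in fewer than `t` points (at most `s` of these) or contains `H ∪ {x}` for some
`x ∈ B`, which gives `|ℱ_H| ≤ s + (k - t + 1) · max_x |ℱ_{H ∪ {x}}|`.
-/

open Finset

/-- `T` is a `t`-cover of `𝓕` if it meets every member of `𝓕` in at least `t` elements. -/
def isTCover (t : ℕ) (T : Finset ℕ) (𝓕 : Finset (Finset ℕ)) : Prop :=
  ∀ F ∈ 𝓕, t ≤ (T ∩ F).card

section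

variable {α : Type*} [DecidableEq α] {𝓕 : Finset (Finset α)}

lemma card_filter_superset_le_choose {S H : Finset α} {k : ℕ} (h𝓕 : 𝓕 ⊆ S.powersetCard k)
    (hH : H ⊆ S) : #{F ∈ 𝓕 | H ⊆ F} ≤ (#S - #H).choose (k - #H) := by
  calc #{F ∈ 𝓕 | H ⊆ F}
      ≤ #((S \ H).powersetCard (k - #H)) := by
        refine card_le_card_of_injOn (· \ H) (fun F hF => ?_) (fun F hF F' hF' hEq => ?_)
        · obtain ⟨hF𝓕, hHF⟩ := mem_filter.1 hF
          obtain ⟨hFS, hFk⟩ := mem_powersetCard.1 (h𝓕 hF𝓕)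
          exact mem_powersetCard.2
            ⟨sdiff_subset_sdiff hFS le_rfl, by rw [card_sdiff_of_subset hHF, hFk]⟩
        · rw [← sdiff_union_of_subset (mem_filter.1 hF).2,
            ← sdiff_union_of_subset (mem_filter.1 hF').2]
          exact congrArg (· ∪ H) hEq
    _ = (#S - #H).choose (k - #H) := by rw [card_powersetCard, card_sdiff_of_subset hH]

lemma card_filter_superset_le_add_sum {F₀ B H : Finset α} {s t : ℕ}
    (hfew : #{F ∈ 𝓕 | #(F ∩ F₀) < t} ≤ s) (hB : #(F₀ \ B) < t) :
    #{F ∈ 𝓕 | H ⊆ F} ≤ s + ∑ x ∈ B, #{F ∈ 𝓕 | insert x H ⊆ F} := by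
  have hcover : {F ∈ 𝓕 | H ⊆ F} ⊆
      {F ∈ 𝓕 | #(F ∩ F₀) < t} ∪ B.biUnion fun x => {F ∈ 𝓕 | insert x H ⊆ F} := by
    intro F hF
    obtain ⟨hF𝓕, hHF⟩ := mem_filter.1 hF
    by_cases hsmall : #(F ∩ F₀) < t
    · exact mem_union_left _ (mem_filter.2 ⟨hF𝓕, hsmall⟩)
    · obtain ⟨x, hxB, hxF⟩ : ∃ x ∈ B, x ∈ F := by
        by_contra! hdisj
        have hsub : F ∩ F₀ ⊆ F₀ \ B := fun y hy =>
          mem_sdiff.2 ⟨(mem_inter.1 hy).2, fun hyB => hdisj y hyB (mem_inter.1 hy).1⟩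
        exact hsmall ((card_le_card hsub).trans_lt hB)
      exact mem_union_right _
        (mem_biUnion.2 ⟨x, hxB, mem_filter.2 ⟨hF𝓕, insert_subset hxF hHF⟩⟩)
  calc #{F ∈ 𝓕 | H ⊆ F}
      ≤ #({F ∈ 𝓕 | #(F ∩ F₀) < t} ∪ B.biUnion fun x => {F ∈ 𝓕 | insert x H ⊆ F}) :=
        card_le_card hcover
    _ ≤ s + ∑ x ∈ B, #{F ∈ 𝓕 | insert x H ⊆ F} :=
        (card_union_le _ _).trans (add_le_add hfew card_biUnion_le)

end

lemma add_mul_pow_mul_add_sum_range {R : Type*} [CommSemiring R] (a b c : R) (d : ℕ) :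
    b + a * (a ^ d * c + ∑ i ∈ range d, b * a ^ i) =
      a ^ (d + 1) * c + ∑ i ∈ range (d + 1), b * a ^ i := by
  rw [sum_range_succ', mul_add, mul_sum]
  simp only [mul_left_comm a b, ← pow_succ', pow_zero, mul_one]
  ring

lemma card_filter_superset_le_of_le_tCoverNumber {k t s τ : ℕ} {S H : Finset ℕ}
    {𝓕 : Finset (Finset ℕ)} (h𝓕 : 𝓕 ⊆ S.powersetCard k) (hai : almostIntersecting s t 𝓕)
    (hτmin : ∀ T ⊆ S, isTCover t T 𝓕 → τ ≤ #T) (hH : H ⊆ S) (hHτ : #H ≤ τ) :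
    #{F ∈ 𝓕 | H ⊆ F} ≤
      (k - t + 1) ^ (τ - #H) * (#S - τ).choose (k - τ) +
        ∑ i ∈ range (τ - #H), s * (k - t + 1) ^ i := by
  set a := k - t + 1
  set C := (#S - τ).choose (k - τ)
  obtain ⟨d, hd⟩ : ∃ d, τ - #H = d := ⟨_, rfl⟩
  rw [hd]
  induction d generalizing H with
  | zero =>
    have hHτ' : #H = τ := by omega
    simpa [C, hHτ'] using card_filter_superset_le_choose h𝓕 hH
  | succ d ih =>
    obtain ⟨F₀, hF₀, hF₀H⟩ : ∃ F₀ ∈ 𝓕, #(H ∩ F₀) < t := by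
      by_contra! hcover
      have := hτmin H hH hcover
      omega
    obtain ⟨hF₀S, hF₀k⟩ := mem_powersetCard.1 (h𝓕 hF₀)
    have hsplit : #(F₀ \ H) + #(H ∩ F₀) = k := by
      rw [inter_comm, card_sdiff_add_card_inter, hF₀k]
    obtain ⟨B, hBF₀H, hB⟩ := exists_subset_card_eq (min_le_left #(F₀ \ H) a)
    have hBF₀ : #(F₀ \ B) < t := by
      rw [card_sdiff_of_subset (hBF₀H.trans sdiff_subset), hF₀k, hB]
      omega
    have hbranch : ∀ x ∈ B, #{F ∈ 𝓕 | insert x H ⊆ F} ≤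
        a ^ d * C + ∑ i ∈ range d, s * a ^ i := by
      intro x hx
      obtain ⟨hxF₀, hxH⟩ := mem_sdiff.1 (hBF₀H hx)
      have hcard := card_insert_of_notMem hxH
      exact ih (insert_subset (hF₀S hxF₀) hH) (by omega) (by omega)
    calc #{F ∈ 𝓕 | H ⊆ F}
        ≤ s + ∑ x ∈ B, #{F ∈ 𝓕 | insert x H ⊆ F} :=
          card_filter_superset_le_add_sum (hai F₀ hF₀) hBF₀
      _ ≤ s + #B * (a ^ d * C + ∑ i ∈ range d, s * a ^ i) := by
          grw [sum_le_card_nsmul B _ _ hbranch, smul_eq_mul]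
      _ ≤ s + a * (a ^ d * C + ∑ i ∈ range d, s * a ^ i) := by
          gcongr
          omega
      _ = a ^ (d + 1) * C + ∑ i ∈ range (d + 1), s * a ^ i :=
          add_mul_pow_mul_add_sum_range a s C d

theorem stmt10_general (n k t s τ : ℕ)
    (𝓕 : Finset (Finset ℕ)) (h𝓕 : 𝓕 ⊆ (Icc 1 n).powersetCard k)
    (hai : almostIntersecting s t 𝓕)
    (hτmin : ∀ T ⊆ Icc 1 n, isTCover t T 𝓕 → τ ≤ T.card)
    (H : Finset ℕ) (hH : H ⊆ Icc 1 n) (hHcard : H.card < τ) :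
    (𝓕.filter (fun F => H ⊆ F)).card ≤
      (k - t + 1) ^ (τ - H.card) * Nat.choose (n - τ) (k - τ) +
        ∑ i ∈ Finset.range (τ - H.card), s * (k - t + 1) ^ i := by
  simpa using card_filter_superset_le_of_le_tCoverNumber h𝓕 hai hτmin hH hHcard.le

theorem stmt10 (n k t s τ : ℕ) (hn : 0 < n) (hk : 0 < k) (ht : 0 < t) (hs : 0 < s)
    (hkt : t + 1 ≤ k) (hnge : (t + 1) * (k - t + 1) ^ 2 ≤ n)
    (𝓕 : Finset (Finset ℕ)) (h𝓕 : 𝓕 ⊆ (Icc 1 n).powersetCard k)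
    (hai : almostIntersecting s t 𝓕)
    (hτmem : ∃ T ⊆ Icc 1 n, isTCover t T 𝓕 ∧ T.card = τ)
    (hτmin : ∀ T ⊆ Icc 1 n, isTCover t T 𝓕 → τ ≤ T.card)
    (hτ1 : t + 1 ≤ τ) (hτ2 : τ ≤ k)
    (H : Finset ℕ) (hH : H ⊆ Icc 1 n) (hHcard : H.card < τ) :
    (𝓕.filter (fun F => H ⊆ F)).card ≤
      (k - t + 1) ^ (τ - H.card) * Nat.choose (n - τ) (k - τ) +
        ∑ i ∈ Finset.range (τ - H.card), s * (k - t + 1) ^ i :=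
  stmt10_general n k t s τ 𝓕 h𝓕 hai hτmin H hH hHcard
end

section
/- Let n, t, s be positive integers with n ≥ t+3. Suppose ℱ ⊆ binom([n], t+1) is an s-almost t-intersecting family which is not t-intersecting. If |F₁ ∩ F₂| ≥ t−1 for all F₁, F₂ ∈ ℱ, then |ℱ| ≤ 2s+4. -/
open Finset

/-!
Pick `A, B ∈ 𝓕` with `|A ∩ B| < t`, so `|A ∩ B| = t - 1` and `A \ B`, `B \ A` have two elements
each. At most `2s` members meet `A` or `B` in fewer than `t` elements. Any other member `F`
satisfies `|F ∩ A ∩ B| ≥ |F ∩ A| + |F ∩ B| - |F| ≥ t - 1`, so it contains `A ∩ B`, and it is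
completed by one point of `A \ B` and one of `B \ A`: at most `2 · 2` such members.
-/

namespace Finset

variable {α : Type*} [DecidableEq α]

theorem card_le_card_filter_add_card_filter_add_card_filter_not_and_not (s : Finset α)
    (p q : α → Prop) [DecidablePred p] [DecidablePred q] :
    #s ≤ #(s.filter p) + #(s.filter q) + #(s.filter fun a => ¬p a ∧ ¬q a) := by
  have hcover : s ⊆ s.filter p ∪ s.filter q ∪ s.filter fun a => ¬p a ∧ ¬q a := by
    intro a ha
    by_cases hp : p a <;> by_cases hq : q a <;> simp [ha, hp, hq]
  calc #s ≤ #(s.filter p ∪ s.filter q ∪ s.filter fun a => ¬p a ∧ ¬q a) := card_le_card hcover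
    _ ≤ #(s.filter p ∪ s.filter q) + #(s.filter fun a => ¬p a ∧ ¬q a) := card_union_le _ _
    _ ≤ _ := Nat.add_le_add_right (card_union_le _ _) _

variable {A B F : Finset α} {t : ℕ}

theorem inter_subset_of_le_card_inter (hF : #F = t + 1) (hAB : #(A ∩ B) + 1 = t)
    (hFA : t ≤ #(F ∩ A)) (hFB : t ≤ #(F ∩ B)) : A ∩ B ⊆ F := by
  have hunion : #(F ∩ A ∪ F ∩ B) ≤ t + 1 := hF ▸ card_le_card (union_subset inter_subset_left
    inter_subset_left)
  have hinter := card_union_add_card_inter (F ∩ A) (F ∩ B)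
  rw [← inter_inter_distrib_left] at hinter
  have hsame : F ∩ (A ∩ B) = A ∩ B := eq_of_subset_of_card_le inter_subset_right (by omega)
  exact hsame ▸ inter_subset_left

theorem exists_eq_insert_insert_inter_of_le_card_inter (hF : #F = t + 1)
    (hAB : #(A ∩ B) + 1 = t) (hFA : t ≤ #(F ∩ A)) (hFB : t ≤ #(F ∩ B)) :
    ∃ x ∈ A \ B, ∃ y ∈ B \ A, F = insert x (insert y (A ∩ B)) := by
  have hsub := inter_subset_of_le_card_inter hF hAB hFA hFB
  obtain ⟨x, hxFA, hxAB⟩ := exists_mem_notMem_of_card_lt_card (s := A ∩ B) (t := F ∩ A)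
    (by omega)
  obtain ⟨y, hyFB, hyAB⟩ := exists_mem_notMem_of_card_lt_card (s := A ∩ B) (t := F ∩ B)
    (by omega)
  rw [mem_inter] at hxFA hyFB
  have hxB : x ∉ B := fun hxB => hxAB (mem_inter.2 ⟨hxFA.2, hxB⟩)
  have hyA : y ∉ A := fun hyA => hyAB (mem_inter.2 ⟨hyA, hyFB.2⟩)
  have hxy : x ∉ insert y (A ∩ B) := by
    rw [mem_insert]
    rintro (rfl | hx)
    exacts [hyA hxFA.2, hxAB hx]
  have hcard : #(insert x (insert y (A ∩ B))) = t + 1 := by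
    rw [card_insert_of_notMem hxy, card_insert_of_notMem hyAB, ← hAB]
  refine ⟨x, mem_sdiff.2 ⟨hxFA.2, hxB⟩, y, mem_sdiff.2 ⟨hyFB.2, hyA⟩, ?_⟩
  refine (eq_of_subset_of_card_le ?_ (by omega)).symm
  exact insert_subset hxFA.1 (insert_subset hyFB.1 hsub)

theorem card_filter_le_card_sdiff_mul_card_sdiff (𝓕 : Finset (Finset α))
    (h𝓕 : ∀ F ∈ 𝓕, #F = t + 1) (hAB : #(A ∩ B) + 1 = t) :
    #(𝓕.filter fun F => t ≤ #(F ∩ A) ∧ t ≤ #(F ∩ B)) ≤ #(A \ B) * #(B \ A) := by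
  have himage : 𝓕.filter (fun F => t ≤ #(F ∩ A) ∧ t ≤ #(F ∩ B)) ⊆
      ((A \ B) ×ˢ (B \ A)).image fun p => insert p.1 (insert p.2 (A ∩ B)) := by
    intro F hF
    obtain ⟨hF𝓕, hFA, hFB⟩ := mem_filter.1 hF
    obtain ⟨x, hx, y, hy, rfl⟩ :=
      exists_eq_insert_insert_inter_of_le_card_inter (h𝓕 F hF𝓕) hAB hFA hFB
    exact mem_image.2 ⟨(x, y), mem_product.2 ⟨hx, hy⟩, rfl⟩
  exact (card_le_card himage).trans (card_image_le.trans (card_product _ _).le)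

end Finset

theorem stmt11_general (n t s : ℕ)
    (𝓕 : Finset (Finset ℕ)) (h𝓕 : 𝓕 ⊆ (Icc 1 n).powersetCard (t + 1))
    (hai : almostIntersecting s t 𝓕) (hni : ¬ tIntersecting t 𝓕)
    (hbig : ∀ F₁ ∈ 𝓕, ∀ F₂ ∈ 𝓕, t - 1 ≤ (F₁ ∩ F₂).card) :
    𝓕.card ≤ 2 * s + 4 := by
  obtain ⟨A, hA, B, hB, hAB⟩ : ∃ A ∈ 𝓕, ∃ B ∈ 𝓕, #(A ∩ B) < t := by
    simpa [tIntersecting] using hni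
  have hcard : ∀ F ∈ 𝓕, #F = t + 1 := fun F hF => (mem_powersetCard.1 (h𝓕 hF)).2
  have hABcard : #(A ∩ B) + 1 = t := by have := hbig A hA B hB; omega
  have hAsdiff : #(A \ B) = 2 := by
    have := card_inter_add_card_sdiff A B; have := hcard A hA; omega
  have hBsdiff : #(B \ A) = 2 := by
    have := card_inter_add_card_sdiff B A; rw [inter_comm] at this; have := hcard B hB; omega
  have hrest : #(𝓕.filter fun F => ¬#(F ∩ A) < t ∧ ¬#(F ∩ B) < t) ≤ 2 * 2 := by
    simpa only [not_lt, hAsdiff, hBsdiff] using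
      card_filter_le_card_sdiff_mul_card_sdiff 𝓕 hcard hABcard
  calc #𝓕 ≤ #(𝓕.filter fun F => #(F ∩ A) < t) + #(𝓕.filter fun F => #(F ∩ B) < t) +
        #(𝓕.filter fun F => ¬#(F ∩ A) < t ∧ ¬#(F ∩ B) < t) :=
        card_le_card_filter_add_card_filter_add_card_filter_not_and_not 𝓕 _ _
    _ ≤ s + s + 2 * 2 := add_le_add (add_le_add (hai A hA) (hai B hB)) hrest
    _ = 2 * s + 4 := by ring

theorem stmt11 (n t s : ℕ) (hn : 0 < n) (ht : 0 < t) (hs : 0 < s)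
    (hnge : t + 3 ≤ n)
    (𝓕 : Finset (Finset ℕ)) (h𝓕 : 𝓕 ⊆ (Icc 1 n).powersetCard (t + 1))
    (hai : almostIntersecting s t 𝓕) (hni : ¬ tIntersecting t 𝓕)
    (hbig : ∀ F₁ ∈ 𝓕, ∀ F₂ ∈ 𝓕, t - 1 ≤ (F₁ ∩ F₂).card) :
    𝓕.card ≤ 2 * s + 4 :=
  stmt11_general n t s 𝓕 h𝓕 hai hni hbig
end

section
/- Let n, t, s be positive integers with n ≥ t+3. Suppose ℱ ⊆ binom([n], t+1) is an s-almost t-intersecting family which is not t-intersecting. If |F₁ ∩ F₂| ≤ t−2 for some F₁, F₂ ∈ ℱ, then |ℱ| ≤ 2s. -/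
open Finset

/-! A `(t + 1)`-set meeting both `F₁` and `F₂` in at least `t` points would force
`#(F₁ ∩ F₂) ≥ 2t - (t + 1) = t - 1`. So every member of the family is one of the at most `s`
members far from `F₁` or one of the at most `s` members far from `F₂`. -/

theorem Finset.card_inter_add_card_inter_le {α : Type*} [DecidableEq α] (F A B : Finset α) :
    #(F ∩ A) + #(F ∩ B) ≤ #F + #(A ∩ B) := by
  rw [← card_union_add_card_inter]
  gcongr
  · exact union_subset inter_subset_left inter_subset_left
  · exact inter_subset_right
  · exact inter_subset_right

theorem Finset.subset_filter_union_filter_of_card_inter_le {α : Type*} [DecidableEq α]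
    {t : ℕ} {𝓕 : Finset (Finset α)} (h𝓕 : ∀ F ∈ 𝓕, #F ≤ t + 1) {A B : Finset α}
    (hAB : #(A ∩ B) + 2 ≤ t) :
    𝓕 ⊆ {F ∈ 𝓕 | #(F ∩ A) < t} ∪ {F ∈ 𝓕 | #(F ∩ B) < t} := by
  intro F hF
  have := card_inter_add_card_inter_le F A B
  have := h𝓕 F hF
  simp only [mem_union, mem_filter, hF, true_and]
  omega

theorem card_le_two_mul_of_almostIntersecting {s t : ℕ} {𝓕 : Finset (Finset ℕ)}
    (h𝓕 : ∀ F ∈ 𝓕, #F ≤ t + 1) (hai : almostIntersecting s t 𝓕) {A B : Finset ℕ}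
    (hA : A ∈ 𝓕) (hB : B ∈ 𝓕) (hAB : #(A ∩ B) + 2 ≤ t) :
    #𝓕 ≤ 2 * s :=
  calc #𝓕 ≤ #({F ∈ 𝓕 | #(F ∩ A) < t} ∪ {F ∈ 𝓕 | #(F ∩ B) < t}) :=
        card_le_card (subset_filter_union_filter_of_card_inter_le h𝓕 hAB)
    _ ≤ #{F ∈ 𝓕 | #(F ∩ A) < t} + #{F ∈ 𝓕 | #(F ∩ B) < t} := card_union_le _ _
    _ ≤ 2 * s := by linarith [hai A hA, hai B hB]

theorem stmt12_general (n t s : ℕ)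
    (𝓕 : Finset (Finset ℕ)) (h𝓕 : 𝓕 ⊆ (Icc 1 n).powersetCard (t + 1))
    (hai : almostIntersecting s t 𝓕)
    (hsmall : ∃ F₁ ∈ 𝓕, ∃ F₂ ∈ 𝓕, ((F₁ ∩ F₂).card : ℤ) ≤ (t : ℤ) - 2) :
    𝓕.card ≤ 2 * s := by
  obtain ⟨F₁, h₁, F₂, h₂, hsmall⟩ := hsmall
  refine card_le_two_mul_of_almostIntersecting (fun F hF => ?_) hai h₁ h₂ (by omega)
  exact (mem_powersetCard.mp (h𝓕 hF)).2.le

theorem stmt12 (n t s : ℕ) (hn : 0 < n) (ht : 0 < t) (hs : 0 < s)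
    (hnge : t + 3 ≤ n)
    (𝓕 : Finset (Finset ℕ)) (h𝓕 : 𝓕 ⊆ (Icc 1 n).powersetCard (t + 1))
    (hai : almostIntersecting s t 𝓕) (hni : ¬ tIntersecting t 𝓕)
    (hsmall : ∃ F₁ ∈ 𝓕, ∃ F₂ ∈ 𝓕, ((F₁ ∩ F₂).card : ℤ) ≤ (t : ℤ) - 2) :
    𝓕.card ≤ 2 * s :=
  stmt12_general n t s 𝓕 h𝓕 hai hsmall
end

section
/- Let n, k, t, s be positive integers with k ≥ t+1 and n ≥ 2k. If ℱ ⊆ binom([n], k) is an s-almost t-intersecting family whose t-covering number satisfies τ_t(ℱ) ≥ k+1, then |ℱ| ≤ s · binom(2k−2t+2, k−t+1). -/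
open Finset

/-!
Call `F, G ∈ 𝓕` conflicting if `|F ∩ G| < t`. Every `F ∈ 𝓕` has a conflict, since otherwise
`F` itself would be a `t`-cover of size `k`. Greedily pick conflicting pairs `(Aᵢ, Bᵢ)` in `𝓕`
such that each new `Aⱼ` meets every earlier `Bᵢ` in at least `t` points, until every member of
`𝓕` conflicts with some `Bᵢ`; then `|𝓕| ≤ s r` by almost-intersection.

The pairs form a skew cross-intersecting system: with `t' = t - 1` and `m = k - t + 1`,
`|Aᵢ ∩ Bᵢ| ≤ t'` and `|Aⱼ ∩ Bᵢ| > t'` for `i < j`, which forces `r ≤ C(2m, m)`. For this,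
attach to a `k`-set `S` the `m` coefficient windows (degrees `t', …, t' + 2m - 1`) of
`Xˡ ∏_{x ∈ S} (X - xₓ)` over `ℚ[xₓ]`. The determinant of the windows of `S` and `S'` vanishes
when `|S ∩ S'| > t'` (a common factor of degree `t' + 1` gives a relation), and is nonzero when
`|S ∩ S'| ≤ t'`, as a specialisation of the variables shows. Viewed as alternating forms in the
windows of `Aⱼ` against those of `Bᵢ`, the determinants are triangular, so the wedge products of
the windows of the `Aⱼ` are linearly independent in `⋀ᵐ` of a space of dimension `2m`.
-/

open Matrix

theorem linearIndependent_of_triangular {R V ι : Type*} [CommRing R] [IsDomain R]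
    [AddCommGroup V] [Module R V] [Fintype ι] [LinearOrder ι]
    (y : ι → V) (F : ι → Module.Dual R V) (hdiag : ∀ i, F i (y i) ≠ 0)
    (hlt : ∀ i j, i < j → F i (y j) = 0) : LinearIndependent R y := by
  let A : Matrix ι ι R := .of fun i j => F i (y j)
  have hA : A.det ≠ 0 := by
    rw [det_of_isLowerTriangular A fun i j hij => hlt i j hij]
    exact prod_ne_zero_iff.mpr fun i _ => hdiag i
  exact .of_comp (LinearMap.pi F) (linearIndependent_cols_of_det_ne_zero hA)

theorem card_le_choose_of_triangular {R M : Type*} [CommRing R] [IsDomain R]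
    [AddCommGroup M] [Module R M] [Module.Free R M] [Module.Finite R M] {n r : ℕ}
    (f : Fin r → M [⋀^Fin n]→ₗ[R] R) (x : Fin r → Fin n → M) (hdiag : ∀ i, f i (x i) ≠ 0)
    (hlt : ∀ i j, i < j → f i (x j) = 0) : r ≤ (Module.finrank R M).choose n := by
  have hind : LinearIndependent R fun j => exteriorPower.ιMulti R n (x j) :=
    linearIndependent_of_triangular _ (fun i => exteriorPower.alternatingMapLinearEquiv (f i))
      (by simpa using hdiag) (by simpa using hlt)
  simpa [exteriorPower.finrank_eq] using hind.fintype_card_le_finrank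

namespace Matrix

theorem of_sumElim_update {R ι κ : Type*} [DecidableEq ι] [DecidableEq κ]
    (x : ι → ι ⊕ κ → R) (W : κ → ι ⊕ κ → R) (i : ι) (y : ι ⊕ κ → R) :
    of (Sum.elim (Function.update x i y) W) = (of (Sum.elim x W)).updateRow (.inl i) y :=
  congrArg of Sum.update_elim_inl.symm

variable {R ι κ : Type*} [CommRing R] [Fintype ι] [Fintype κ] [DecidableEq ι] [DecidableEq κ]

def detSumElimLeft (W : κ → ι ⊕ κ → R) : (ι ⊕ κ → R) [⋀^ι]→ₗ[R] R where
  toFun x := (of (Sum.elim x W)).det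
  map_update_add' x i y z := by
    simp only [of_sumElim_update]
    convert det_updateRow_add _ _ y z
  map_update_smul' x i c y := by
    simp only [of_sumElim_update, smul_eq_mul]
    convert det_updateRow_smul _ _ c y
  map_eq_zero_of_eq' x i j hx hij :=
    det_zero_of_row_eq (i := .inl i) (j := .inl j) (by simpa using hij) hx

@[simp] theorem detSumElimLeft_apply (W : κ → ι ⊕ κ → R) (x : ι → ι ⊕ κ → R) :
    detSumElimLeft W x = (of (Sum.elim x W)).det := rfl

end Matrix

namespace Polynomial

variable {R : Type*} [CommRing R]

theorem coeff_mul_eq_sum_fin {m : ℕ} {u : R[X]} (hu : u.degree < m) (p : R[X]) (n : ℕ) :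
    (u * p).coeff n = ∑ l : Fin m, u.coeff l * (X ^ (l : ℕ) * p).coeff n := by
  conv_lhs => rw [← sum_C_mul_X_pow_eq u, ← sum_fin _ (by simp) hu]
  simp [Finset.sum_mul, mul_assoc]

theorem coeff_mul_eq_zero_of_degree_lt {u f : R[X]} {a b n : ℕ} (hu : u.degree < a)
    (hf : f.natDegree ≤ b) (hn : a + b ≤ n) : (u * f).coeff n = 0 := by
  rcases eq_or_ne u 0 with rfl | hu0
  · simp
  apply coeff_eq_zero_of_natDegree_lt
  have := (natDegree_lt_iff_degree_lt hu0).mpr hu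
  have := natDegree_mul_le (p := u) (q := f)
  omega

noncomputable def windowRows (t m : ℕ) (p : R[X]) : Fin m → Fin m ⊕ Fin m → R :=
  fun l c => (X ^ (l : ℕ) * p).coeff (t + finSumFinEquiv c)

/-- A truncated Sylvester matrix: its left kernel consists of the pairs `(u, w)` of degree `< m`
for which the coefficients of `u * p + w * q` in degrees `t, …, t + 2m - 1` vanish. -/
noncomputable def windowMatrix (t m : ℕ) (p q : R[X]) :
    Matrix (Fin m ⊕ Fin m) (Fin m ⊕ Fin m) R :=
  .of (Sum.elim (windowRows t m p) (windowRows t m q))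

theorem vecMul_windowMatrix (t m : ℕ) (p q : R[X]) (u w : degreeLT R m) (c : Fin m ⊕ Fin m) :
    (Sum.elim (degreeLTEquiv R m u) (degreeLTEquiv R m w) ᵥ* windowMatrix t m p q) c =
      ((u : R[X]) * p + w * q).coeff (t + finSumFinEquiv c) := by
  rw [coeff_add, coeff_mul_eq_sum_fin (mem_degreeLT.mp u.2),
    coeff_mul_eq_sum_fin (mem_degreeLT.mp w.2)]
  simp [vecMul, dotProduct, Fintype.sum_sum_type, windowMatrix, windowRows, degreeLTEquiv]

theorem windowMatrix_map {S : Type*} [CommRing S] (f : R →+* S) (t m : ℕ) (p q : R[X]) :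
    (windowMatrix t m p q).map f = windowMatrix t m (p.map f) (q.map f) := by
  ext (l | l) c <;> simp [windowMatrix, windowRows, ← coeff_map]

theorem det_windowMatrix_eq_zero [IsDomain R] {t m : ℕ} {p q u w : R[X]}
    (hu : u ∈ degreeLT R m) (hw : w ∈ degreeLT R m) (hu0 : u ≠ 0) (h : u * p = w * q) :
    (windowMatrix t m p q).det = 0 := by
  rw [← exists_vecMul_eq_zero_iff]
  refine ⟨Sum.elim (degreeLTEquiv R m ⟨u, hu⟩) (degreeLTEquiv R m ⟨-w, neg_mem hw⟩),
    ?_, ?_⟩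
  · intro h0
    refine hu0 ((degreeLTEquiv_eq_zero_iff_eq_zero hu).mp ?_)
    ext l
    exact congrFun h0 (.inl l)
  · ext c
    rw [vecMul_windowMatrix]
    simp [h]

theorem eq_zero_of_coeff_mul_add_mul_eq_zero {K : Type*} [Field K] {g P Q u w : K[X]}
    (hg : g ≠ 0) (hPQ : IsCoprime P Q) (hu : u.degree < Q.degree) (hw : w.degree < P.degree)
    (hcoeff : ∀ n, g.natDegree ≤ n → (u * (g * P) + w * (g * Q)).coeff n = 0) :
    u = 0 ∧ w = 0 := by
  have hsum : u * P + w * Q = 0 := by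
    by_contra hne
    have hW : g * (u * P + w * Q) ≠ 0 := mul_ne_zero hg hne
    apply hW
    rw [← leadingCoeff_eq_zero, leadingCoeff,
      ← hcoeff _ (natDegree_le_of_dvd (dvd_mul_right _ _) hW)]
    ring_nf
  have hQu : Q ∣ u := hPQ.symm.dvd_of_dvd_mul_right ⟨-w, by linear_combination hsum⟩
  have hPw : P ∣ w := hPQ.dvd_of_dvd_mul_right ⟨-u, by linear_combination hsum⟩
  exact ⟨eq_zero_of_dvd_of_degree_lt hQu hu, eq_zero_of_dvd_of_degree_lt hPw hw⟩

theorem det_windowMatrix_ne_zero {K : Type*} [Field K] {t m : ℕ} {g P Q : K[X]}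
    (hg : g.Monic) (hgt : g.natDegree = t) (hP : P.degree = m) (hQ : Q.degree = m)
    (hPQ : IsCoprime P Q) : (windowMatrix t m (g * P) (g * Q)).det ≠ 0 := by
  intro h
  obtain ⟨v, hv0, hv⟩ := exists_vecMul_eq_zero_iff.mpr h
  set u := (degreeLTEquiv K m).symm (v ∘ Sum.inl)
  set w := (degreeLTEquiv K m).symm (v ∘ Sum.inr)
  have hv_eq : v = Sum.elim (degreeLTEquiv K m u) (degreeLTEquiv K m w) := by
    simp [u, w]
  have hdeg : ∀ F : K[X], F.degree = m → (g * F).natDegree ≤ t + m := fun F hF =>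
    natDegree_mul_le.trans (by rw [hgt, natDegree_eq_of_degree_eq_some hF])
  have hcoeff : ∀ n, g.natDegree ≤ n → ((u : K[X]) * (g * P) + w * (g * Q)).coeff n = 0 := by
    intro n hn
    rcases lt_or_ge n (t + (m + m)) with hlt | hge
    · have := congrFun hv (finSumFinEquiv.symm ⟨n - t, by omega⟩)
      rwa [hv_eq, vecMul_windowMatrix, Equiv.apply_symm_apply, Fin.val_mk,
        Nat.add_sub_cancel' (hgt ▸ hn)] at this
    · rw [coeff_add, coeff_mul_eq_zero_of_degree_lt (mem_degreeLT.mp u.2) (hdeg P hP) (by omega),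
        coeff_mul_eq_zero_of_degree_lt (mem_degreeLT.mp w.2) (hdeg Q hQ) (by omega), add_zero]
  obtain ⟨hu, hw⟩ := eq_zero_of_coeff_mul_add_mul_eq_zero hg.ne_zero hPQ
    (hQ ▸ mem_degreeLT.mp u.2) (hP ▸ mem_degreeLT.mp w.2) hcoeff
  apply hv0
  rw [hv_eq, Submodule.coe_eq_zero.mp hu, Submodule.coe_eq_zero.mp hw]
  ext (_ | _) <;> simp

end Polynomial

namespace Lagrange

open Polynomial

variable {α R : Type*} [CommRing R]

theorem map_nodal {S : Type*} [CommRing S] (f : R →+* S) (s : Finset α) (v : α → R) :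
    (nodal s v).map f = nodal s (f ∘ v) := by
  simp [nodal, Polynomial.map_prod]

variable [DecidableEq α]

theorem nodal_eq_X_sub_C_pow_mul {s s' : Finset α} {v : α → R} {a b : R} (hs' : s' ⊆ s)
    (ha : ∀ x ∈ s', v x = a) (hb : ∀ x ∈ s \ s', v x = b) :
    nodal s v = (X - C a) ^ #s' * (X - C b) ^ #(s \ s') := by
  rw [nodal, ← prod_sdiff hs', prod_congr rfl fun x hx => congrArg (X - C ·) (hb x hx),
    prod_congr rfl fun x hx => congrArg (X - C ·) (ha x hx), prod_const, prod_const, mul_comm]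

theorem det_windowMatrix_nodal_eq_zero [IsDomain R] {t m : ℕ} {A B : Finset α} (v : α → R)
    (hA : #A = t + m) (hB : #B = t + m) (hAB : t < #(A ∩ B)) :
    (windowMatrix t m (nodal A v) (nodal B v)).det = 0 := by
  obtain ⟨T, hT, hTcard⟩ := exists_subset_card_eq (Nat.succ_le_of_lt hAB)
  have hTA : T ⊆ A := hT.trans inter_subset_left
  have hTB : T ⊆ B := hT.trans inter_subset_right
  have hdeg : ∀ S, T ⊆ S → #S = t + m → nodal (S \ T) v ∈ degreeLT R m := by
    intro S hS hSc
    rw [mem_degreeLT, degree_nodal, card_sdiff_of_subset hS]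
    have := card_le_card hS
    exact_mod_cast (by omega : #S - #T < m)
  refine det_windowMatrix_eq_zero (hdeg B hTB hB) (hdeg A hTA hA) nodal_ne_zero ?_
  simp only [nodal]
  rw [← prod_sdiff hTA, ← prod_sdiff hTB]
  ring

theorem det_windowMatrix_nodal_X_ne_zero {t m : ℕ} {A B : Finset α}
    (hA : #A = t + m) (hB : #B = t + m) (hAB : #(A ∩ B) ≤ t) :
    (windowMatrix t m (nodal A (MvPolynomial.X (R := ℚ))) (nodal B MvPolynomial.X)).det ≠
      0 := by
  obtain ⟨A', hABA', hA'A, hA'⟩ := exists_subsuperset_card_eq inter_subset_left hAB (by omega)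
  obtain ⟨B', hABB', hB'B, hB'⟩ := exists_subsuperset_card_eq inter_subset_right hAB (by omega)
  -- After this specialisation the two nodal polynomials share exactly the root `0`, `t` times.
  let φ : α → ℚ := fun x => if x ∈ A' ∪ B' then 0 else if x ∈ A then 1 else 2
  have hφA : nodal A φ = X ^ t * (X - C 1) ^ m := by
    rw [nodal_eq_X_sub_C_pow_mul hA'A (a := 0) (b := 1), card_sdiff_of_subset hA'A, hA', hA]
    · simp
    all_goals intro x hx; simp only [φ]; grind
  have hφB : nodal B φ = X ^ t * (X - C 2) ^ m := by
    rw [nodal_eq_X_sub_C_pow_mul hB'B (a := 0) (b := 2), card_sdiff_of_subset hB'B, hB', hB]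
    · simp
    all_goals intro x hx; simp only [φ]; grind
  have hφ : MvPolynomial.eval φ ∘ MvPolynomial.X = φ := funext fun x => MvPolynomial.eval_X ..
  have hdeg : ∀ a : ℚ, ((X - C a) ^ m).degree = (m : WithBot ℕ) := fun a => by
    rw [degree_pow, degree_X_sub_C, nsmul_one]
  intro h
  refine det_windowMatrix_ne_zero (monic_X_pow t) (natDegree_X_pow t) (hdeg 1) (hdeg 2)
    (isCoprime_X_sub_C_of_isUnit_sub (a := (1 : ℚ)) (b := 2) (by norm_num)).pow ?_
  rw [← hφA, ← hφB, ← hφ, ← map_nodal, ← map_nodal, ← windowMatrix_map,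
    ← RingHom.mapMatrix_apply, ← RingHom.map_det, h, map_zero]

end Lagrange

theorem card_le_choose_of_skew_cross_intersecting {α : Type*} [DecidableEq α] {t m r : ℕ}
    (A B : Fin r → Finset α) (hA : ∀ i, #(A i) = t + m) (hB : ∀ i, #(B i) = t + m)
    (hAB : ∀ i, #(A i ∩ B i) ≤ t) (hskew : ∀ i j, i < j → t < #(A j ∩ B i)) :
    r ≤ (m + m).choose m := by
  let rows (S : Finset α) :=
    Polynomial.windowRows t m (Lagrange.nodal S (MvPolynomial.X (R := ℚ)))
  have := card_le_choose_of_triangular (fun i => detSumElimLeft (rows (B i)))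
    (fun j => rows (A j))
    (fun i => Lagrange.det_windowMatrix_nodal_X_ne_zero (hA i) (hB i) (hAB i))
    (fun i j hij => Lagrange.det_windowMatrix_nodal_eq_zero _ (hA j) (hB i) (hskew i j hij))
  simpa using this

section SkewConflict

variable {α : Type*} [DecidableEq α] (t : ℕ) (𝓕 : Finset (Finset α))

def IsSkewConflictSeq {r : ℕ} (A B : Fin r → Finset α) : Prop :=
  (∀ i, A i ∈ 𝓕 ∧ B i ∈ 𝓕 ∧ #(A i ∩ B i) < t) ∧ ∀ i j, i < j → t ≤ #(A j ∩ B i)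

variable {t 𝓕}

theorem IsSkewConflictSeq.card_le {r : ℕ} {A B : Fin r → Finset α}
    (h : IsSkewConflictSeq t 𝓕 A B) : r ≤ #𝓕 := by
  have hne : ∀ i j, i < j → A j ≠ A i := fun i j hij hA => by
    have := h.2 i j hij
    have := (h.1 i).2.2
    rw [hA] at *
    omega
  have hinj : Set.InjOn A (univ : Finset (Fin r)) := fun i _ j _ hij => by
    by_contra hij'
    rcases lt_or_gt_of_ne hij' with hlt | hlt
    exacts [hne i j hlt hij.symm, hne j i hlt hij]
  simpa using card_le_card_of_injOn A (fun i _ => (h.1 i).1) hinj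

theorem IsSkewConflictSeq.snoc {r : ℕ} {A B : Fin r → Finset α}
    (h : IsSkewConflictSeq t 𝓕 A B) {F G : Finset α} (hF : F ∈ 𝓕) (hG : G ∈ 𝓕) (hFG : #(F ∩ G) < t)
    (hFB : ∀ i, t ≤ #(F ∩ B i)) :
    IsSkewConflictSeq t 𝓕 (Fin.snoc A F : Fin (r + 1) → Finset α) (Fin.snoc B G) := by
  constructor
  · intro i
    induction i using Fin.lastCases with
    | last => simpa using ⟨hF, hG, hFG⟩
    | cast i => simpa using h.1 i
  · intro i j hij
    induction j using Fin.lastCases with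
    | last =>
      induction i using Fin.lastCases with
      | last => exact absurd hij (lt_irrefl _)
      | cast i => simpa using hFB i
    | cast j =>
      induction i using Fin.lastCases with
      | last => exact absurd hij (Fin.le_last _).not_gt
      | cast i => simpa using h.2 i j (by simpa using hij)

theorem exists_isSkewConflictSeq_covering (hconf : ∀ F ∈ 𝓕, ∃ G ∈ 𝓕, #(F ∩ G) < t) :
    ∃ r, ∃ A B : Fin r → Finset α,
      IsSkewConflictSeq t 𝓕 A B ∧ ∀ F ∈ 𝓕, ∃ i, #(F ∩ B i) < t := by
  classical
  let P q := ∃ A B : Fin q → Finset α, IsSkewConflictSeq t 𝓕 A B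
  have h0 : P 0 := ⟨Fin.elim0, Fin.elim0, fun i => i.elim0, fun i => i.elim0⟩
  obtain ⟨A, B, hAB⟩ := Nat.findGreatest_spec (n := #𝓕) (Nat.zero_le _) h0
  refine ⟨_, A, B, hAB, ?_⟩
  by_contra! ⟨F, hF, hFB⟩
  obtain ⟨G, hG, hFG⟩ := hconf F hF
  have hnext := hAB.snoc hF hG hFG hFB
  exact Nat.findGreatest_is_greatest (Nat.lt_succ_self _) hnext.card_le ⟨_, _, hnext⟩

end SkewConflict

theorem card_le_mul_of_covering {s t r : ℕ} {𝓕 : Finset (Finset ℕ)}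
    (hai : almostIntersecting s t 𝓕) {B : Fin r → Finset ℕ} (hB : ∀ i, B i ∈ 𝓕)
    (hcov : ∀ F ∈ 𝓕, ∃ i, #(F ∩ B i) < t) : #𝓕 ≤ s * r :=
  calc #𝓕 ≤ #(univ.biUnion fun i => 𝓕.filter fun F => #(F ∩ B i) < t) :=
        card_le_card fun F hF => by simpa [hF] using hcov F hF
    _ ≤ ∑ i, #(𝓕.filter fun F => #(F ∩ B i) < t) := card_biUnion_le
    _ ≤ ∑ _i : Fin r, s := sum_le_sum fun i _ => hai (B i) (hB i)
    _ = s * r := by simp [mul_comm]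

theorem stmt13_general (n k t s : ℕ) (ht : 0 < t)
    (hkt : t + 1 ≤ k)
    (𝓕 : Finset (Finset ℕ)) (h𝓕 : 𝓕 ⊆ (Icc 1 n).powersetCard k)
    (hai : almostIntersecting s t 𝓕)
    (hτ : ∀ T ⊆ Icc 1 n, isTCover t T 𝓕 → k + 1 ≤ T.card) :
    𝓕.card ≤ s * Nat.choose (2 * k - 2 * t + 2) (k - t + 1) := by
  have hconf : ∀ F ∈ 𝓕, ∃ G ∈ 𝓕, #(F ∩ G) < t := by
    intro F hF
    obtain ⟨hFn, hFk⟩ := mem_powersetCard.mp (h𝓕 hF)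
    by_contra! hcover
    have := hτ F hFn hcover
    omega
  obtain ⟨r, A, B, hAB, hcov⟩ := exists_isSkewConflictSeq_covering hconf
  have hcard : ∀ F ∈ 𝓕, #F = (t - 1) + (k - t + 1) := fun F hF => by
    rw [(mem_powersetCard.mp (h𝓕 hF)).2]
    omega
  have hr : r ≤ ((k - t + 1) + (k - t + 1)).choose (k - t + 1) :=
    card_le_choose_of_skew_cross_intersecting A B (fun i => hcard _ (hAB.1 i).1)
      (fun i => hcard _ (hAB.1 i).2.1) (fun i => by have := (hAB.1 i).2.2; omega)
      (fun i j hij => by have := hAB.2 i j hij; omega)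
  calc #𝓕 ≤ s * r := card_le_mul_of_covering hai (fun i => (hAB.1 i).2.1) hcov
    _ ≤ s * (2 * k - 2 * t + 2).choose (k - t + 1) := by
      rw [show 2 * k - 2 * t + 2 = (k - t + 1) + (k - t + 1) by omega]
      exact Nat.mul_le_mul_left s hr

theorem stmt13 (n k t s : ℕ) (hn : 0 < n) (hk : 0 < k) (ht : 0 < t) (hs : 0 < s)
    (hkt : t + 1 ≤ k) (hnge : 2 * k ≤ n)
    (𝓕 : Finset (Finset ℕ)) (h𝓕 : 𝓕 ⊆ (Icc 1 n).powersetCard k)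
    (hai : almostIntersecting s t 𝓕)
    (hτ : ∀ T ⊆ Icc 1 n, isTCover t T 𝓕 → k + 1 ≤ T.card) :
    𝓕.card ≤ s * Nat.choose (2 * k - 2 * t + 2) (k - t + 1) :=
  stmt13_general n k t s ht hkt 𝓕 h𝓕 hai hτ
end

section
/- Let n, k, t, s be positive integers with k ≥ t+2 and n ≥ 2k+s. Suppose ℱ ⊆ binom([n], k) is a maximal s-almost t-intersecting family (i.e., for every C ∈ binom([n], k) \ ℱ, the family ℱ ∪ {C} is not s-almost t-intersecting) with t-covering number τ_t(ℱ) ≤ k. Let 𝒯 be the set of all t-covers of ℱ of size τ_t(ℱ). Then 𝒯 is t-intersecting, i.e., |T₁ ∩ T₂| ≥ t for all T₁, T₂ ∈ 𝒯. -/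
/-!
Suppose two `t`-covers of size `τ ≤ k` satisfy `|T₁ ∩ T₂| < t`. By maximality every `k`-set
containing a `t`-cover already belongs to `𝓕`. If `τ = k` this puts `T₁` in `𝓕`, which `T₂` then
fails to `t`-cover. If `τ < k`, extend `T₂` to a member `C₂` that avoids `T₁ \ T₂`, and `T₁` to a
`(k - 1)`-set `B` that avoids `C₂ \ T₁`. The sets `insert x B` with `x ∉ B ∪ C₂` are at least
`n - (2k - 1) ≥ s + 1` members of `𝓕`, each meeting `C₂` exactly in `T₁ ∩ T₂`, contradicting
that `C₂` has at most `s` partners meeting it in fewer than `t` elements.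
-/

open Finset

lemma mem_of_isTCover_subset {U : Finset ℕ} {k t s : ℕ} {𝓕 : Finset (Finset ℕ)} (htk : t ≤ k)
    (hai : almostIntersecting s t 𝓕)
    (hmaximal : ∀ C ∈ U.powersetCard k, C ∉ 𝓕 → ¬ almostIntersecting s t (insert C 𝓕))
    {T C : Finset ℕ} (hT : isTCover t T 𝓕) (hTC : T ⊆ C) (hCU : C ⊆ U) (hCk : C.card = k) :
    C ∈ 𝓕 := by
  by_contra hC
  refine hmaximal C (mem_powersetCard.mpr ⟨hCU, hCk⟩) hC fun F hF => ?_
  have hCF : ∀ F ∈ 𝓕, ¬ (F ∩ C).card < t := fun F hF =>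
    not_lt.mpr <| inter_comm F C ▸ (hT F hF).trans (card_le_card (inter_subset_inter_right hTC))
  rcases mem_insert.mp hF with rfl | hF
  · suffices (insert F 𝓕).filter (fun F' => (F' ∩ F).card < t) = ∅ by simp [this]
    refine filter_eq_empty_iff.mpr fun F' hF' => ?_
    rcases mem_insert.mp hF' with rfl | hF'
    · simpa [hCk] using htk
    · exact hCF F' hF'
  · rw [filter_insert, if_neg (by rw [inter_comm]; exact hCF F hF)]
    exact hai F hF

lemma exists_superset_card_eq_inter_eq {α : Type*} [DecidableEq α] {T S U : Finset α} {m : ℕ}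
    (hTU : T ⊆ U) (hTm : T.card ≤ m) (hroom : m + S.card ≤ U.card) :
    ∃ C, T ⊆ C ∧ C ⊆ U ∧ C.card = m ∧ C ∩ S = T ∩ S := by
  obtain ⟨Y, hYU, hYcard⟩ : ∃ Y ⊆ U \ (S ∪ T), Y.card = m - T.card := by
    refine exists_subset_card_eq ?_
    have := le_card_sdiff (S ∪ T) U
    have := card_union_le S T
    omega
  have hYS : Disjoint Y S := disjoint_of_subset_right subset_union_left (subset_sdiff.mp hYU).2
  have hYT : Disjoint Y T := disjoint_of_subset_right subset_union_right (subset_sdiff.mp hYU).2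
  refine ⟨T ∪ Y, subset_union_left, union_subset hTU (hYU.trans sdiff_subset), ?_, ?_⟩
  · rw [card_union_of_disjoint hYT.symm]
    omega
  · rw [union_inter_distrib_right, disjoint_iff_inter_eq_empty.mp hYS, union_empty]

lemma card_le_of_insert_mem_of_card_inter_lt {s t : ℕ} {𝓕 : Finset (Finset ℕ)}
    (hai : almostIntersecting s t 𝓕) {A B Q : Finset ℕ} (hA : A ∈ 𝓕) (hQB : Disjoint Q B)
    (hQ : ∀ x ∈ Q, insert x B ∈ 𝓕 ∧ (insert x B ∩ A).card < t) :
    Q.card ≤ s := by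
  refine (card_le_card_of_injOn (insert · B) (fun x hx => ?_) fun x hx y _ hxy => ?_).trans
    (hai A hA)
  · exact mem_filter.mpr (hQ x hx)
  · exact (insert_inj (disjoint_left.mp hQB hx)).mp hxy

theorem stmt14_general (n k t s τ : ℕ)
    (hkt : t + 2 ≤ k) (hnge : 2 * k + s ≤ n)
    (𝓕 : Finset (Finset ℕ))
    (hai : almostIntersecting s t 𝓕)
    (hmaximal : ∀ C ∈ (Icc 1 n).powersetCard k, C ∉ 𝓕 →
      ¬ almostIntersecting s t (insert C 𝓕))
    (hτk : τ ≤ k) :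
    ∀ T₁ ⊆ Icc 1 n, ∀ T₂ ⊆ Icc 1 n,
      isTCover t T₁ 𝓕 → isTCover t T₂ 𝓕 → T₁.card = τ → T₂.card = τ →
        t ≤ (T₁ ∩ T₂).card := by
  intro T₁ hT₁ T₂ hT₂ hc₁ hc₂ hcard₁ hcard₂
  by_contra! hlt
  have hU : (Icc 1 n).card = n := by simp
  have mem := @mem_of_isTCover_subset _ k t s 𝓕 (by omega) hai hmaximal
  rcases hτk.eq_or_lt with rfl | hτk
  · have := hc₂ T₁ (mem hc₁ subset_rfl hT₁ hcard₁)
    rw [inter_comm] at this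
    omega
  obtain ⟨C₂, hTC₂, hC₂U, hC₂k, hC₂T₁⟩ :=
    exists_superset_card_eq_inter_eq (S := T₁) (m := k) hT₂ (by omega) (by omega)
  have hC₂ : C₂ ∈ 𝓕 := mem hc₂ hTC₂ hC₂U hC₂k
  obtain ⟨B, hTB, hBU, hBk, hBC₂⟩ :=
    exists_superset_card_eq_inter_eq (S := C₂) (m := k - 1) hT₁ (by omega) (by omega)
  have hfew : (Icc 1 n \ (B ∪ C₂)).card ≤ s := by
    refine card_le_of_insert_mem_of_card_inter_lt hai hC₂
      (disjoint_of_subset_right subset_union_left sdiff_disjoint) fun x hx => ?_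
    obtain ⟨hxU, hxBC⟩ := mem_sdiff.mp hx
    refine ⟨mem hc₁ (hTB.trans (subset_insert x B)) (insert_subset hxU hBU) ?_, ?_⟩
    · rw [card_insert_of_notMem fun h => hxBC (mem_union_left _ h)]
      omega
    · rw [insert_inter_of_notMem fun h => hxBC (mem_union_right _ h), hBC₂, inter_comm,
        hC₂T₁, inter_comm]
      exact hlt
  have := le_card_sdiff (B ∪ C₂) (Icc 1 n)
  have := card_union_le B C₂
  omega

theorem stmt14 (n k t s τ : ℕ) (hn : 0 < n) (hk : 0 < k) (ht : 0 < t) (hs : 0 < s)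
    (hkt : t + 2 ≤ k) (hnge : 2 * k + s ≤ n)
    (𝓕 : Finset (Finset ℕ)) (h𝓕 : 𝓕 ⊆ (Icc 1 n).powersetCard k)
    (hai : almostIntersecting s t 𝓕)
    (hmaximal : ∀ C ∈ (Icc 1 n).powersetCard k, C ∉ 𝓕 →
      ¬ almostIntersecting s t (insert C 𝓕))
    (hτmem : ∃ T ⊆ Icc 1 n, isTCover t T 𝓕 ∧ T.card = τ)
    (hτmin : ∀ T ⊆ Icc 1 n, isTCover t T 𝓕 → τ ≤ T.card)
    (hτk : τ ≤ k) :
    ∀ T₁ ⊆ Icc 1 n, ∀ T₂ ⊆ Icc 1 n,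
      isTCover t T₁ 𝓕 → isTCover t T₂ 𝓕 → T₁.card = τ → T₂.card = τ →
        t ≤ (T₁ ∩ T₂).card :=
  stmt14_general n k t s τ hkt hnge 𝓕 hai hmaximal hτk
end

section
/- Let n and t be positive integers with n ≥ t+2. Suppose 𝒯 ⊆ binom([n], t+1) is a t-intersecting family with |𝒯| ≥ 2. If there exist two t-covers A and B of 𝒯 (subsets of [n] with |A ∩ T| ≥ t and |B ∩ T| ≥ t for all T ∈ 𝒯) such that |A ∩ B| < t, then the common intersection ⋂_{T∈𝒯} T is a t-element subset of A or a t-element subset of B. -/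
open Finset

/-!
Counting `A ∩ T` and `B ∩ T` by inclusion–exclusion inside a `(t+1)`-set `T` forces
`|A ∩ B| = t - 1`, `A ∩ B ⊆ T ⊆ A ∪ B` and `|A ∩ T| = |B ∩ T| = t`. Since two members of the family
meet in at least `t = |A ∩ B| + 1` points, the same count shows that they agree on `A` or on `B`,
and a family in which any two members agree on `A` or on `B` agrees on `A` throughout or on `B`
throughout. If all `A ∩ T` are the same `t`-set `S`, then `S` lies in the common intersection,
which has at most `t` points because it lies in two distinct `(t+1)`-sets; so it equals `S ⊆ A`.
-/

theorem Set.forall_eq_or_forall_eq_of_forall_eq_or_eq {α β γ : Type*} {s : Set α}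
    {f : α → β} {g : α → γ} (h : ∀ x ∈ s, ∀ y ∈ s, f x = f y ∨ g x = g y) :
    (∀ x ∈ s, ∀ y ∈ s, f x = f y) ∨ (∀ x ∈ s, ∀ y ∈ s, g x = g y) := by
  rw [or_iff_not_imp_left]
  push Not
  rintro ⟨x, hx, y, hy, hxy⟩
  have hg : ∀ u ∈ s, g u = g x := fun u hu => by
    rcases h u hu x hx with hux | hux
    · rcases h u hu y hy with huy | huy
      · exact absurd (hux.symm.trans huy) hxy
      · exact huy.trans ((h x hx y hy).resolve_left hxy).symm
    · exact hux
  intro u hu v hv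
  rw [hg u hu, hg v hv]

namespace Finset

variable {α : Type*} [DecidableEq α]

theorem card_inter_lt_of_ne {s s' : Finset α} {m : ℕ} (hs : s.card = m) (hs' : s'.card = m)
    (h : s ≠ s') : (s ∩ s').card < m := by
  by_contra! hle
  have hss' : s ⊆ s' := inter_eq_left.mp (eq_of_subset_of_card_le inter_subset_left (by omega))
  exact h (eq_of_subset_of_card_le hss' (by omega))

theorem inf'_eq_of_forall_subset_of_card_eq {𝓣 : Finset (Finset α)} (hne : 𝓣.Nonempty)
    {S : Finset α} {t : ℕ} (h𝓣 : ∀ T ∈ 𝓣, T.card = t + 1) (hcard : 2 ≤ 𝓣.card)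
    (hS : ∀ T ∈ 𝓣, S ⊆ T) (hSc : S.card = t) : 𝓣.inf' hne id = S := by
  obtain ⟨T₁, hT₁, T₂, hT₂, hT₁₂⟩ := one_lt_card.mp hcard
  have hlt := card_inter_lt_of_ne (h𝓣 T₁ hT₁) (h𝓣 T₂ hT₂) hT₁₂
  have hle : (𝓣.inf' hne id).card ≤ (T₁ ∩ T₂).card :=
    card_le_card (subset_inter (inf'_le id hT₁) (inf'_le id hT₂))
  exact (eq_of_subset_of_card_le (le_inf' hne id hS) (by omega)).symm

variable {A B T T₁ T₂ : Finset α} {t : ℕ}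

theorem two_covers_tight (hT : T.card = t + 1) (hA : t ≤ (A ∩ T).card) (hB : t ≤ (B ∩ T).card)
    (hAB : (A ∩ B).card < t) :
    (A ∩ B).card + 1 = t ∧ A ∩ B ⊆ T ∧ T ⊆ A ∪ B ∧ (A ∩ T).card = t ∧ (B ∩ T).card = t := by
  have hie : (A ∩ T).card + (B ∩ T).card = ((A ∪ B) ∩ T).card + (A ∩ B ∩ T).card := by
    rw [← card_union_add_card_inter, ← union_inter_distrib_right, ← inter_inter_distrib_right]
  have hunion : ((A ∪ B) ∩ T).card ≤ t + 1 := hT ▸ card_le_card inter_subset_right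
  have hinter : (A ∩ B ∩ T).card ≤ (A ∩ B).card := card_le_card inter_subset_left
  refine ⟨by omega, ?_, ?_, by omega, by omega⟩
  · exact inter_eq_left.mp (eq_of_subset_of_card_le inter_subset_left (by omega))
  · exact inter_eq_right.mp (eq_of_subset_of_card_le inter_subset_right (by omega))

theorem card_inter_lt_of_covers_ne (hAB : (A ∩ B).card + 1 = t) (hsub : A ∩ B ⊆ T₁ ∩ T₂)
    (hsup : T₁ ⊆ A ∪ B) (hA₁ : (A ∩ T₁).card = t) (hA₂ : (A ∩ T₂).card = t)
    (hB₁ : (B ∩ T₁).card = t) (hB₂ : (B ∩ T₂).card = t)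
    (hAne : A ∩ T₁ ≠ A ∩ T₂) (hBne : B ∩ T₁ ≠ B ∩ T₂) : (T₁ ∩ T₂).card < t := by
  have hA := card_inter_lt_of_ne hA₁ hA₂ hAne
  have hB := card_inter_lt_of_ne hB₁ hB₂ hBne
  rw [← inter_inter_distrib_left] at hA hB
  have hie : (A ∩ (T₁ ∩ T₂)).card + (B ∩ (T₁ ∩ T₂)).card = (T₁ ∩ T₂).card + (A ∩ B).card := by
    rw [← card_union_add_card_inter, ← union_inter_distrib_right, ← inter_inter_distrib_right,
      inter_eq_right.mpr (inter_subset_left.trans hsup), inter_eq_left.mpr hsub]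
  omega

end Finset

theorem stmt15_general (n t : ℕ)
    (𝓣 : Finset (Finset ℕ)) (h𝓣 : 𝓣 ⊆ (Icc 1 n).powersetCard (t + 1))
    (hint : tIntersecting t 𝓣) (hcard : 2 ≤ 𝓣.card) (hne : 𝓣.Nonempty)
    (A B : Finset ℕ)
    (hAcov : ∀ T ∈ 𝓣, t ≤ (A ∩ T).card) (hBcov : ∀ T ∈ 𝓣, t ≤ (B ∩ T).card)
    (hAB : (A ∩ B).card < t) :
    (𝓣.inf' hne id).card = t ∧ (𝓣.inf' hne id ⊆ A ∨ 𝓣.inf' hne id ⊆ B) := by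
  have hT : ∀ T ∈ 𝓣, T.card = t + 1 := fun T h => (mem_powersetCard.mp (h𝓣 h)).2
  have hcov := fun T h => two_covers_tight (hT T h) (hAcov T h) (hBcov T h) hAB
  have hagree : ∀ T₁ ∈ 𝓣, ∀ T₂ ∈ 𝓣, A ∩ T₁ = A ∩ T₂ ∨ B ∩ T₁ = B ∩ T₂ := by
    intro T₁ h₁ T₂ h₂
    by_contra! ⟨hAne, hBne⟩
    obtain ⟨hAB', hsub₁, hsup₁, hA₁, hB₁⟩ := hcov T₁ h₁
    obtain ⟨-, hsub₂, -, hA₂, hB₂⟩ := hcov T₂ h₂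
    exact (hint T₁ h₁ T₂ h₂).not_gt <| card_inter_lt_of_covers_ne hAB'
      (subset_inter hsub₁ hsub₂) hsup₁ hA₁ hA₂ hB₁ hB₂ hAne hBne
  obtain ⟨T₀, hT₀⟩ := id hne
  have hinf : ∀ C : Finset ℕ, (∀ T ∈ 𝓣, C ∩ T = C ∩ T₀) → (C ∩ T₀).card = t →
      𝓣.inf' hne id = C ∩ T₀ := fun C hC hCt =>
    inf'_eq_of_forall_subset_of_card_eq hne hT hcard
      (fun T h => hC T h ▸ inter_subset_right) hCt
  rcases Set.forall_eq_or_forall_eq_of_forall_eq_or_eq (s := (𝓣 : Set (Finset ℕ))) hagree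
    with hA | hB
  · rw [hinf A (fun T h => hA T h T₀ hT₀) (hcov T₀ hT₀).2.2.2.1]
    exact ⟨(hcov T₀ hT₀).2.2.2.1, Or.inl inter_subset_left⟩
  · rw [hinf B (fun T h => hB T h T₀ hT₀) (hcov T₀ hT₀).2.2.2.2]
    exact ⟨(hcov T₀ hT₀).2.2.2.2, Or.inr inter_subset_left⟩

theorem stmt15 (n t : ℕ) (hn : 0 < n) (ht : 0 < t) (hnge : t + 2 ≤ n)
    (𝓣 : Finset (Finset ℕ)) (h𝓣 : 𝓣 ⊆ (Icc 1 n).powersetCard (t + 1))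
    (hint : tIntersecting t 𝓣) (hcard : 2 ≤ 𝓣.card) (hne : 𝓣.Nonempty)
    (A B : Finset ℕ) (hA : A ⊆ Icc 1 n) (hB : B ⊆ Icc 1 n)
    (hAcov : ∀ T ∈ 𝓣, t ≤ (A ∩ T).card) (hBcov : ∀ T ∈ 𝓣, t ≤ (B ∩ T).card)
    (hAB : (A ∩ B).card < t) :
    (𝓣.inf' hne id).card = t ∧ (𝓣.inf' hne id ⊆ A ∨ 𝓣.inf' hne id ⊆ B) :=
  stmt15_general n t 𝓣 h𝓣 hint hcard hne A B hAcov hBcov hAB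
end

section
/- Let n, k, t, s be positive integers with k ≥ t+2 and n ≥ 3·binom(t+2, 2)·((k−t+1)² + s). If ℱ ⊆ binom([n], k) is an s-almost t-intersecting family with t-covering number τ_t(ℱ) ≥ t+2, then |ℱ| < h(n,k,t,s), where h(n,k,t,s) = |{F ∈ binom([n], k) : [t] ⊆ F and |F ∩ [k+1]| ≥ t+1}| + s + min{t, s}. -/
open Finset

/-!
Let `m = min(τ_t(𝓕), k)`, so that `t + 2 ≤ m ≤ k`. If `t ≤ |W| < m`, then `W` is not a `t`-cover,
so some member `Y` meets `W` in `j < t` points, and every member containing `W` either meets `Y` in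
fewer than `t` points (there are at most `s` of those) or contains `W ∪ S` for one of the
`C(k - j, t - j) ≤ (k - t + 1) ^ (t - j)` sets `S ⊆ Y \ W` of size `t - j`. Starting this branching
from the `t`-subsets of a set of size `m` that almost `t`-covers `𝓕` (a minimum `t`-cover, or a
member if `τ_t(𝓕) > k`) bounds `|𝓕|` by `s + C(m, t) · branchBound`, and for `n` this large that is
at most `s + (k - t + 1) · C(n - k - 1, k - t - 1)`. The last term counts the sets `[t] ∪ {x} ∪ R`
with `t < x ≤ k + 1` and `R ⊆ [k + 2, n]`, which all lie in the family defining `h(n, k, t, s)`,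
and `min{t, s} ≥ 1` makes the inequality strict.
-/

namespace Nat

theorem choose_le_choose_of_le_of_le_half {N i j : ℕ} (hij : i ≤ j) (hj : j ≤ N / 2) :
    N.choose i ≤ N.choose j := by
  induction j, hij using Nat.le_induction with
  | base => exact le_rfl
  | succ j _ ih => exact (ih (by omega)).trans (choose_le_succ_of_lt_half_left (by omega))

theorem choose_le_choose_of_le_of_add_le_s16 {N i j : ℕ} (hij : i ≤ j) (h : i + j ≤ N) :
    N.choose i ≤ N.choose j := by
  rcases le_or_gt j (N / 2) with hj | hj
  · exact choose_le_choose_of_le_of_le_half hij hj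
  · rw [← choose_symm (show j ≤ N by omega)]
    exact choose_le_choose_of_le_of_le_half (by omega) (by omega)

theorem mul_choose_pred_le_choose {q x y : ℕ} (hy : 0 < y) (h : q * y ≤ x) :
    q * (x - 1).choose (y - 1) ≤ x.choose y := by
  rcases Nat.eq_zero_or_pos q with rfl | hq
  · simp
  have hid : x * (x - 1).choose (y - 1) = x.choose y * y := by
    have := add_one_mul_choose_eq (x - 1) (y - 1)
    rwa [Nat.sub_add_cancel (by nlinarith), Nat.sub_add_cancel hy] at this
  refine Nat.le_of_mul_le_mul_right ?_ hy
  calc q * (x - 1).choose (y - 1) * y = q * y * (x - 1).choose (y - 1) := by ring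
    _ ≤ x * (x - 1).choose (y - 1) := Nat.mul_le_mul_right _ h
    _ = x.choose y * y := hid

theorem choose_add_succ_le (N Δ r : ℕ) :
    (N + Δ).choose (r + 1) ≤ N.choose (r + 1) + Δ * (N + Δ).choose r := by
  induction Δ with
  | zero => simp
  | succ Δ ih =>
    rw [← add_assoc, choose_succ_succ', add_one_mul]
    have := choose_le_succ (N + Δ) r
    nlinarith

theorem five_mul_choose_add_le {N Δ r : ℕ} (h : 6 * r * Δ + r ≤ N + Δ + 1) :
    5 * (N + Δ).choose r ≤ 6 * N.choose r := by
  obtain _ | r := r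
  · simp
  rcases lt_or_ge (N + Δ) (r + 1) with hr | hr
  · simp [choose_eq_zero_of_lt hr]
  have hid := choose_succ_right_eq (N + Δ) r
  have hpascal := choose_add_succ_le N Δ r
  have hW : 6 * (r + 1) * Δ ≤ N + Δ - r := by omega
  -- With `M = N + Δ`: `(M - r) C(M, r + 1) ≤ (M - r) C(N, r + 1) + Δ (r + 1) C(M, r + 1)`.
  refine Nat.le_of_mul_le_mul_right (c := N + Δ - r) ?_ (by omega)
  nlinarith

theorem three_mul_le_choose {N r : ℕ} (hr : 2 ≤ r) (hN : 7 ≤ N) (hrN : r + 2 ≤ N) :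
    3 * N ≤ N.choose r := by
  have h2 : N.choose 2 * 2 = N * (N - 1) := by
    simpa using choose_succ_right_eq N 1
  have hmono := choose_le_choose_of_le_of_add_le_s16 (N := N) hr (by omega)
  have : N * 6 ≤ N * (N - 1) := Nat.mul_le_mul_left N (by omega)
  omega

end Nat

theorem two_mul_geom_sum_succ_le {a : ℕ} (ha : 2 ≤ a) (d : ℕ) :
    2 * ∑ i ∈ range (d + 1), (a + 1) ^ i ≤ 3 * (a + 1) ^ d := by
  have h := geom_sum_mul_add a (d + 1)
  rw [pow_succ] at h
  refine Nat.le_of_mul_le_mul_left (c := a) ?_ (by omega)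
  nlinarith [Nat.mul_le_mul_right ((a + 1) ^ d) ha]

section Families

variable {α : Type*} [DecidableEq α] {𝓕 : Finset (Finset α)} {X V W Y : Finset α} {k t u : ℕ}

theorem card_filter_superset_le (h𝓕 : 𝓕 ⊆ X.powersetCard k) (hV : V ⊆ X) :
    #{F ∈ 𝓕 | V ⊆ F} ≤ (#X - #V).choose (k - #V) := by
  calc #{F ∈ 𝓕 | V ⊆ F} ≤ #((X \ V).powersetCard (k - #V)) := by
        refine card_le_card_of_injOn (· \ V) (fun F hF => ?_) (fun F₁ hF₁ F₂ hF₂ h => ?_)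
        · rw [mem_coe, mem_filter] at hF
          obtain ⟨hFX, hFk⟩ := mem_powersetCard.1 (h𝓕 hF.1)
          rw [mem_coe, mem_powersetCard]
          exact ⟨sdiff_subset_sdiff hFX le_rfl, by rw [card_sdiff_of_subset hF.2, hFk]⟩
        · rw [mem_coe, mem_filter] at hF₁ hF₂
          rw [← sdiff_union_of_subset hF₁.2, ← sdiff_union_of_subset hF₂.2]
          exact congrArg (· ∪ V) h
    _ = (#X - #V).choose (k - #V) := by rw [card_powersetCard, card_sdiff_of_subset hV]

theorem card_filter_superset_eq_zero (h𝓕 : 𝓕 ⊆ X.powersetCard k) (hV : k < #V) :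
    #{F ∈ 𝓕 | V ⊆ F} = 0 := by
  rw [card_eq_zero, filter_eq_empty_iff]
  intro F hF hVF
  have := card_le_card hVF
  rw [(mem_powersetCard.1 (h𝓕 hF)).2] at this
  omega

theorem card_filter_superset_le_add_sum_s16 (hu : #(W ∩ Y) + u ≤ t) :
    #{F ∈ 𝓕 | W ⊆ F} ≤
      #{F ∈ 𝓕 | #(F ∩ Y) < t} + ∑ S ∈ (Y \ W).powersetCard u, #{F ∈ 𝓕 | W ∪ S ⊆ F} := by
  calc #{F ∈ 𝓕 | W ⊆ F}
      ≤ #({F ∈ 𝓕 | #(F ∩ Y) < t} ∪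
          ((Y \ W).powersetCard u).biUnion fun S => {F ∈ 𝓕 | W ∪ S ⊆ F}) := by
        refine card_le_card fun F hF => ?_
        obtain ⟨hF𝓕, hWF⟩ := mem_filter.1 hF
        rcases lt_or_ge #(F ∩ Y) t with hlt | hge
        · exact mem_union_left _ (mem_filter.2 ⟨hF𝓕, hlt⟩)
        have hsplit : #(F ∩ Y) ≤ #(F ∩ (Y \ W)) + #(W ∩ Y) := by
          refine (card_le_card fun x hx => ?_).trans (card_union_le _ _)
          simp only [mem_inter, mem_sdiff, mem_union] at hx ⊢
          tauto
        obtain ⟨S, hS, hSu⟩ := exists_subset_card_eq (show u ≤ #(F ∩ (Y \ W)) by omega)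
        refine mem_union_right _ (mem_biUnion.2 ⟨S, ?_, ?_⟩)
        · exact mem_powersetCard.2 ⟨hS.trans inter_subset_right, hSu⟩
        · exact mem_filter.2 ⟨hF𝓕, union_subset hWF (hS.trans inter_subset_left)⟩
    _ ≤ _ := (card_union_le _ _).trans (Nat.add_le_add_left card_biUnion_le _)

end Families

/-- Bounds the number of members containing a fixed `w`-set when no `t`-cover has fewer than `m`
points: each of the `m - w` branching levels loses at most `s` members and splits into at most `q`
branches, and from size `m` on the trivial bound `C(n - w, k - w)` takes over. -/
def branchBound (n k s q m w : ℕ) : ℕ :=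
  if m ≤ w then (n - w).choose (k - w)
  else s * ∑ i ∈ range (m - w), q ^ i + q ^ (m - w) * (n - m).choose (k - m)

section branchBound

variable {n k s q m w : ℕ}

theorem branchBound_of_le (h : m ≤ w) : branchBound n k s q m w = (n - w).choose (k - w) :=
  if_pos h

theorem branchBound_eq_of_le (h : w ≤ m) :
    branchBound n k s q m w =
      s * ∑ i ∈ range (m - w), q ^ i + q ^ (m - w) * (n - m).choose (k - m) := by
  unfold branchBound
  split_ifs with h'
  · obtain rfl : m = w := le_antisymm h' h
    simp
  · rfl

theorem branchBound_of_lt (h : w < m) :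
    branchBound n k s q m w = s + q * branchBound n k s q m (w + 1) := by
  rw [branchBound_eq_of_le h.le, branchBound_eq_of_le h, show m - w = m - (w + 1) + 1 by omega,
    geom_sum_succ, pow_succ']
  ring

theorem mul_branchBound_succ_le (hqk : q * k ≤ n) (hw : w < k) :
    q * branchBound n k s q m (w + 1) ≤ branchBound n k s q m w := by
  rcases lt_or_ge w m with hwm | hmw
  · rw [branchBound_of_lt hwm (n := n)]
    omega
  · rw [branchBound_of_le hmw, branchBound_of_le (by omega), show n - (w + 1) = n - w - 1 by omega,
      show k - (w + 1) = k - w - 1 by omega]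
    refine Nat.mul_choose_pred_le_choose (by omega) ?_
    have : q * (k - w) + q * w = q * k := by rw [← mul_add, Nat.sub_add_cancel hw.le]
    rcases Nat.eq_zero_or_pos q with rfl | hq
    · simp
    · have := Nat.le_mul_of_pos_left w hq
      omega

theorem pow_mul_branchBound_add_le (hqk : q * k ≤ n) {u : ℕ} (hwu : w + u ≤ k) :
    q ^ u * branchBound n k s q m (w + u) ≤ branchBound n k s q m w := by
  induction u with
  | zero => simp
  | succ u ih =>
    calc q ^ (u + 1) * branchBound n k s q m (w + (u + 1))
        = q ^ u * (q * branchBound n k s q m (w + u + 1)) := by ring_nf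
      _ ≤ q ^ u * branchBound n k s q m (w + u) :=
        Nat.mul_le_mul_left _ (mul_branchBound_succ_le hqk (by omega))
      _ ≤ branchBound n k s q m w := ih (by omega)

end branchBound

section Branching

variable {α : Type*} [DecidableEq α] {𝓕 : Finset (Finset α)} {X W Y : Finset α} {k s a m u : ℕ}

theorem sum_card_filter_union_superset_le (h𝓕 : 𝓕 ⊆ X.powersetCard k) (hX : (a + 1) * k ≤ #X)
    (hu : 0 < u) (hYW : #(Y \ W) = a + u)
    (hbound : #W + u ≤ k → ∀ S ∈ (Y \ W).powersetCard u,
      #{F ∈ 𝓕 | W ∪ S ⊆ F} ≤ branchBound #X k s (a + 1) m (#W + u)) :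
    ∑ S ∈ (Y \ W).powersetCard u, #{F ∈ 𝓕 | W ∪ S ⊆ F} ≤
      (a + 1) * branchBound #X k s (a + 1) m (#W + 1) := by
  rcases le_or_gt (#W + u) k with hWu | hWu
  · calc ∑ S ∈ (Y \ W).powersetCard u, #{F ∈ 𝓕 | W ∪ S ⊆ F}
        ≤ (a + u).choose u * branchBound #X k s (a + 1) m (#W + u) := by
          simpa [hYW] using sum_le_card_nsmul _ _ _ (hbound hWu)
      _ ≤ (a + 1) ^ u * branchBound #X k s (a + 1) m (#W + 1 + (u - 1)) := by
          rw [show #W + 1 + (u - 1) = #W + u by omega]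
          exact Nat.mul_le_mul_right _ (Nat.choose_add_le_add_one_pow _ _)
      _ = (a + 1) * ((a + 1) ^ (u - 1) * branchBound #X k s (a + 1) m (#W + 1 + (u - 1))) := by
          rw [← mul_assoc, ← pow_succ', Nat.sub_add_cancel hu]
      _ ≤ (a + 1) * branchBound #X k s (a + 1) m (#W + 1) :=
          Nat.mul_le_mul_left _ (pow_mul_branchBound_add_le hX (by omega))
  · refine le_of_eq_of_le (sum_eq_zero fun S hS => ?_) (Nat.zero_le _)
    obtain ⟨hSY, hSu⟩ := mem_powersetCard.1 hS
    refine card_filter_superset_eq_zero h𝓕 ?_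
    rw [card_union_of_disjoint (disjoint_of_subset_right hSY disjoint_sdiff), hSu]
    omega

end Branching

section Recursion

variable {𝓕 : Finset (Finset ℕ)} {X : Finset ℕ} {k t s m : ℕ}

theorem card_filter_superset_le_branchBound (h𝓕 : 𝓕 ⊆ X.powersetCard k)
    (hai : almostIntersecting s t 𝓕) (htk : t ≤ k) (hX : (k - t + 1) * k ≤ #X)
    (hτ : ∀ T ⊆ X, isTCover t T 𝓕 → m ≤ #T) {W : Finset ℕ} (hW : W ⊆ X) (htW : t ≤ #W) :
    #{F ∈ 𝓕 | W ⊆ F} ≤ branchBound #X k s (k - t + 1) m #W := by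
  induction hi : m - #W using Nat.strong_induction_on generalizing W with
  | h i ih =>
    rcases le_or_gt m #W with hmW | hWm
    · rw [branchBound_of_le hmW]
      exact card_filter_superset_le h𝓕 hW
    obtain ⟨Y, hY𝓕, hWY⟩ : ∃ Y ∈ 𝓕, #(W ∩ Y) < t := by
      by_contra! h
      have := hτ W hW h
      omega
    obtain ⟨hYX, hYk⟩ := mem_powersetCard.1 (h𝓕 hY𝓕)
    set u := t - #(W ∩ Y)
    have hsum := sum_card_filter_union_superset_le (s := s) (m := m) h𝓕 hX (by omega)
      (show #(Y \ W) = k - t + u by rw [card_sdiff, hYk]; omega) fun _ S hS => by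
        obtain ⟨hSY, hSu⟩ := mem_powersetCard.1 hS
        have hWS : #(W ∪ S) = #W + u := by
          rw [card_union_of_disjoint (disjoint_of_subset_right hSY disjoint_sdiff), hSu]
        rw [← hWS]
        exact ih _ (by omega) (union_subset hW (hSY.trans (sdiff_subset.trans hYX))) (by omega) rfl
    have hsplit :=
      card_filter_superset_le_add_sum_s16 (𝓕 := 𝓕) (u := u) (show #(W ∩ Y) + u ≤ t by omega)
    rw [branchBound_of_lt hWm]
    linarith [hai Y hY𝓕]

theorem exists_almost_tCover (h𝓕 : 𝓕 ⊆ X.powersetCard k) (hai : almostIntersecting s t 𝓕)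
    (htk : t ≤ k) {r : ℕ} (hτ : ∀ T ⊆ X, isTCover t T 𝓕 → r ≤ #T) (hrk : r ≤ k) :
    ∃ Y ⊆ X, r ≤ #Y ∧ #Y ≤ k ∧ (∀ T ⊆ X, isTCover t T 𝓕 → #Y ≤ #T) ∧
      #{F ∈ 𝓕 | #(F ∩ Y) < t} ≤ s := by
  classical
  have hX : isTCover t X 𝓕 := fun F hF => by
    obtain ⟨hFX, hFk⟩ := mem_powersetCard.1 (h𝓕 hF)
    rwa [inter_eq_right.2 hFX, hFk]
  obtain ⟨Z, hZ, hZmin⟩ := exists_min_image {T ∈ X.powerset | isTCover t T 𝓕} card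
    ⟨X, mem_filter.2 ⟨mem_powerset_self _, hX⟩⟩
  obtain ⟨hZX, hZcov⟩ := mem_filter.1 hZ
  have hmin : ∀ T ⊆ X, isTCover t T 𝓕 → #Z ≤ #T := fun T hT hTcov =>
    hZmin T (mem_filter.2 ⟨mem_powerset.2 hT, hTcov⟩)
  rcases le_or_gt #Z k with hZk | hkZ
  · refine ⟨Z, mem_powerset.1 hZX, hτ _ (mem_powerset.1 hZX) hZcov, hZk, hmin, ?_⟩
    rw [filter_false_of_mem fun F hF => not_lt.2 (by rw [inter_comm]; exact hZcov F hF)]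
    simp
  · obtain ⟨F, hF, -⟩ : ∃ F ∈ 𝓕, #(∅ ∩ F) < t := by
      by_contra! h
      have := hmin ∅ (empty_subset _) h
      simp only [card_empty] at this
      omega
    obtain ⟨hFX, hFk⟩ := mem_powersetCard.1 (h𝓕 hF)
    exact ⟨F, hFX, hFk ▸ hrk, hFk.le, fun T hT hTcov => hFk ▸ hkZ.le.trans (hmin T hT hTcov),
      hai F hF⟩

theorem card_le_add_choose_mul_branchBound (h𝓕 : 𝓕 ⊆ X.powersetCard k)
    (hai : almostIntersecting s t 𝓕) (htk : t ≤ k) (hX : (k - t + 1) * k ≤ #X) {Y : Finset ℕ}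
    (hτ : ∀ T ⊆ X, isTCover t T 𝓕 → #Y ≤ #T) (hY : Y ⊆ X) (hYs : #{F ∈ 𝓕 | #(F ∩ Y) < t} ≤ s) :
    #𝓕 ≤ s + (#Y).choose t * branchBound #X k s (k - t + 1) #Y t := by
  have hsplit := card_filter_superset_le_add_sum_s16 (𝓕 := 𝓕) (W := ∅) (Y := Y) (t := t) (u := t)
    (by simp)
  simp only [empty_subset, filter_true, sdiff_empty, empty_union] at hsplit
  have hT : ∀ T ∈ Y.powersetCard t, #{F ∈ 𝓕 | T ⊆ F} ≤ branchBound #X k s (k - t + 1) #Y t := by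
    intro T hT
    obtain ⟨hTY, hTt⟩ := mem_powersetCard.1 hT
    simpa [hTt] using card_filter_superset_le_branchBound h𝓕 hai htk hX hτ (hTY.trans hY) hTt.ge
  have := sum_le_card_nsmul _ _ _ hT
  rw [card_powersetCard, smul_eq_mul] at this
  omega

end Recursion

theorem branchBound_step_ineq {a s m d N r : ℕ} (ha : 2 ≤ a) (hr : 0 < r) (hrN : r < N)
    (hs : 3 * (m + 1) * s ≤ (d + 1) * N) (hbranch : 2 * (m + 1) * ((a + 1) * r) ≤ (d + 1) * N) :
    (m + 1) * (s * ∑ i ∈ range (d + 1), (a + 1) ^ i + (a + 1) ^ (d + 1) * (N - 1).choose (r - 1))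
      ≤ (d + 1) * (s * ∑ i ∈ range d, (a + 1) ^ i + (a + 1) ^ d * N.choose r) := by
  set G := ∑ i ∈ range (d + 1), (a + 1) ^ i
  set P := (a + 1) ^ d
  set C := N.choose r
  have hNC : N ≤ C := by
    simpa using Nat.choose_le_choose_of_le_of_add_le_s16 (N := N) (i := 1) hr (by omega)
  have hid : N * (N - 1).choose (r - 1) = C * r := by
    have := Nat.add_one_mul_choose_eq (N - 1) (r - 1)
    rwa [Nat.sub_add_cancel (by omega), Nat.sub_add_cancel hr] at this
  have hG : (m + 1) * (2 * (s * G)) ≤ (d + 1) * (P * C) :=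
    calc (m + 1) * (2 * (s * G)) = (m + 1) * s * (2 * G) := by ring
      _ ≤ (m + 1) * s * (3 * P) := Nat.mul_le_mul_left _ (two_mul_geom_sum_succ_le ha d)
      _ = P * (3 * (m + 1) * s) := by ring
      _ ≤ P * ((d + 1) * C) := Nat.mul_le_mul_left _ (hs.trans (Nat.mul_le_mul_left _ hNC))
      _ = (d + 1) * (P * C) := by ring
  have hC : (m + 1) * (2 * ((a + 1) ^ (d + 1) * (C * r))) ≤ (d + 1) * (N * (P * C)) :=
    calc (m + 1) * (2 * ((a + 1) ^ (d + 1) * (C * r)))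
        = 2 * (m + 1) * ((a + 1) * r) * (P * C) := by rw [pow_succ]; ring
      _ ≤ (d + 1) * N * (P * C) := Nat.mul_le_mul_right _ hbranch
      _ = (d + 1) * (N * (P * C)) := by ring
  refine Nat.le_of_mul_le_mul_left (c := 2 * N) ?_ (by omega)
  calc 2 * N * ((m + 1) * (s * G + (a + 1) ^ (d + 1) * (N - 1).choose (r - 1)))
      = N * ((m + 1) * (2 * (s * G))) +
          (m + 1) * (2 * ((a + 1) ^ (d + 1) * (N * (N - 1).choose (r - 1)))) := by ring
    _ ≤ N * ((d + 1) * (P * C)) + (d + 1) * (N * (P * C)) := by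
      rw [hid]; exact Nat.add_le_add (Nat.mul_le_mul_left _ hG) hC
    _ = 2 * N * ((d + 1) * (P * C)) := by ring
    _ ≤ 2 * N * ((d + 1) * (s * ∑ i ∈ range d, (a + 1) ^ i + P * C)) :=
      Nat.mul_le_mul_left _ (Nat.mul_le_mul_left _ (Nat.le_add_left _ _))

theorem branchBound_base_ineq {b c s N : ℕ} (hc : 3 ≤ c) (hb : 0 < b)
    (hN : c * (3 * s + 2 * (b + 3) ^ 2) ≤ N) :
    c * (s * (b + 4) + (b + 3) ^ 2 * (N + (b + 1)).choose b) ≤ (b + 3) * N.choose (b + 1) := by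
  have hN2 : c * (2 * (b + 3) ^ 2) ≤ N := le_trans (Nat.mul_le_mul_left _ (by omega)) hN
  have hsq : 6 * (b + 3) ^ 2 ≤ c * (2 * (b + 3) ^ 2) := by nlinarith
  have hratio : 5 * (N + (b + 1)).choose b ≤ 6 * N.choose b :=
    Nat.five_mul_choose_add_le (by nlinarith)
  have hid := Nat.choose_succ_right_eq N b
  -- The binomial term takes four fifths of the right-hand side and the `s`-term one fifth.
  have hmain : 6 * (c * (b + 3) ^ 2 * N.choose b) ≤ 4 * ((b + 3) * N.choose (b + 1)) := by
    have hscalar : 6 * (c * (b + 3) * (b + 1)) ≤ 4 * (N - b) := by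
      have : 6 * (c * (b + 3) * (b + 1)) + 4 * b ≤ 4 * (c * (2 * (b + 3) ^ 2)) := by nlinarith
      omega
    refine Nat.le_of_mul_le_mul_right (c := b + 1) ?_ (by omega)
    calc 6 * (c * (b + 3) ^ 2 * N.choose b) * (b + 1)
        = (b + 3) * N.choose b * (6 * (c * (b + 3) * (b + 1))) := by ring
      _ ≤ (b + 3) * N.choose b * (4 * (N - b)) := Nat.mul_le_mul_left _ hscalar
      _ = 4 * (b + 3) * (N.choose b * (N - b)) := by ring
      _ = 4 * ((b + 3) * N.choose (b + 1)) * (b + 1) := by rw [← hid]; ring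
  have hs : 5 * (c * s * (b + 4)) ≤ (b + 3) * N.choose (b + 1) := by
    have := Nat.three_mul_le_choose (N := N) (r := b + 1) (by omega) (by nlinarith) (by nlinarith)
    nlinarith
  nlinarith

theorem choose_mul_branchBound_succ_le {n k t s d : ℕ} (hd : 2 ≤ d) (hdk : t + d < k)
    (hn : (t + 3) * (s + (k - t + 1) ^ 2) + k ≤ n) :
    (t + d + 1).choose t * branchBound n k s (k - t + 1) (t + d + 1) t ≤
      (t + d).choose t * branchBound n k s (k - t + 1) (t + d) t := by
  have hN : (t + 3) * (s + (k - t + 1) ^ 2) ≤ n - (t + d) := by omega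
  have hdt : 3 * (t + d + 1) ≤ (d + 1) * (t + 3) := by nlinarith
  have hs : 3 * (t + d + 1) * s ≤ (d + 1) * (n - (t + d)) :=
    calc 3 * (t + d + 1) * s ≤ (d + 1) * ((t + 3) * s) := by
          rw [← mul_assoc]; exact Nat.mul_le_mul_right _ hdt
      _ ≤ (d + 1) * (n - (t + d)) :=
          Nat.mul_le_mul_left _ ((Nat.mul_le_mul_left _ (by omega)).trans hN)
  have hbranch : 2 * (t + d + 1) * ((k - t + 1) * (k - (t + d))) ≤ (d + 1) * (n - (t + d)) := by
    suffices 3 * (2 * (t + d + 1) * ((k - t + 1) * (k - (t + d)))) ≤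
        2 * ((d + 1) * (n - (t + d))) by omega
    calc 3 * (2 * (t + d + 1) * ((k - t + 1) * (k - (t + d))))
        = 2 * (3 * (t + d + 1)) * ((k - t + 1) * (k - (t + d))) := by ring
      _ ≤ 2 * ((d + 1) * (t + 3)) * ((k - t + 1) * (k - t + 1)) :=
          Nat.mul_le_mul (Nat.mul_le_mul_left _ hdt) (Nat.mul_le_mul_left _ (by omega))
      _ = 2 * ((d + 1) * ((t + 3) * (k - t + 1) ^ 2)) := by ring
      _ ≤ 2 * ((d + 1) * (n - (t + d))) := Nat.mul_le_mul_left _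
          (Nat.mul_le_mul_left _ ((Nat.mul_le_mul_left _ (by omega)).trans hN))
  have hpos : 0 < (t + 3) * (s + (k - t + 1) ^ 2) := by positivity
  have hstep := branchBound_step_ineq (by omega) (by omega) (by omega) hs hbranch
  have hchoose := Nat.choose_mul_succ_eq (t + d) t
  rw [show t + d + 1 - t = d + 1 by omega] at hchoose
  rw [branchBound_eq_of_le (by omega), branchBound_eq_of_le (by omega),
    show t + d + 1 - t = d + 1 by omega, show t + d - t = d by omega,
    show n - (t + d + 1) = n - (t + d) - 1 by omega,
    show k - (t + d + 1) = k - (t + d) - 1 by omega]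
  refine Nat.le_of_mul_le_mul_right (c := d + 1) ?_ (by omega)
  calc _ = (t + d + 1).choose t * (d + 1) * (s * ∑ i ∈ range (d + 1), (k - t + 1) ^ i +
          (k - t + 1) ^ (d + 1) * (n - (t + d) - 1).choose (k - (t + d) - 1)) := by ring
    _ = (t + d).choose t * ((t + d + 1) * (s * ∑ i ∈ range (d + 1), (k - t + 1) ^ i +
          (k - t + 1) ^ (d + 1) * (n - (t + d) - 1).choose (k - (t + d) - 1))) := by
        rw [← hchoose]; ring
    _ ≤ (t + d).choose t * ((d + 1) * (s * ∑ i ∈ range d, (k - t + 1) ^ i +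
          (k - t + 1) ^ d * (n - (t + d)).choose (k - (t + d)))) := Nat.mul_le_mul_left _ hstep
    _ = _ := by ring

theorem choose_mul_branchBound_two_le {n k t s : ℕ} (ht : 0 < t) (hk : t + 2 ≤ k)
    (hn : (t + 2).choose 2 * (3 * s + 2 * (k - t + 1) ^ 2) + k + 1 ≤ n) :
    (t + 2).choose t * branchBound n k s (k - t + 1) (t + 2) t ≤
      (k - t + 1) * (n - k - 1).choose (k - t - 1) := by
  obtain ⟨b, rfl⟩ : ∃ b, k = t + 2 + b := ⟨k - (t + 2), by omega⟩
  have hc : 3 ≤ (t + 2).choose 2 := Nat.choose_le_choose 2 (show 3 ≤ t + 2 by omega)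
  rw [show t + 2 + b - t + 1 = b + 3 by omega] at hn ⊢
  have hN : (t + 2).choose 2 * (3 * s + 2 * (b + 3) ^ 2) ≤ n - (t + 2 + b) - 1 := by omega
  rw [branchBound_eq_of_le (by omega), show t + 2 - t = 2 by omega, Nat.choose_symm_add,
    show n - (t + 2) = n - (t + 2 + b) - 1 + (b + 1) by omega,
    show t + 2 + b - (t + 2) = b by omega,
    show t + 2 + b - t - 1 = b + 1 by omega]
  simp only [sum_range_succ, sum_range_zero, pow_zero, pow_one]
  rcases Nat.eq_zero_or_pos b with rfl | hb
  · simp only [Nat.choose_zero_right, zero_add, Nat.choose_one_right]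
    nlinarith
  · convert branchBound_base_ineq hc hb hN using 3
    ring

theorem lt_choose_two_mul_sq (t a : ℕ) : (a + 1) * (t + a) < (t + 2).choose 2 * (a + 1) ^ 2 := by
  have hc : (t + 2).choose 2 * 2 = (t + 2) * (t + 1) := by
    simpa using Nat.choose_succ_right_eq (t + 2) 1
  have : t + 1 ≤ (t + 2).choose 2 := by nlinarith
  calc (a + 1) * (t + a) < (t + 1) * (a + 1) ^ 2 := by
        have : 0 < (a + 1) * (t * a + 1) := by positivity
        linarith [show (t + 1) * (a + 1) ^ 2 = (a + 1) * (t + a) + (a + 1) * (t * a + 1) by ring]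
    _ ≤ (t + 2).choose 2 * (a + 1) ^ 2 := Nat.mul_le_mul_right _ this

theorem choose_mul_branchBound_le {n k t s m : ℕ} (ht : 0 < t) (hm : t + 2 ≤ m) (hmk : m ≤ k)
    (hn : 3 * (t + 2).choose 2 * ((k - t + 1) ^ 2 + s) ≤ n) :
    m.choose t * branchBound n k s (k - t + 1) m t ≤
      (k - t + 1) * (n - k - 1).choose (k - t - 1) := by
  have hc : (t + 2).choose 2 * 2 = (t + 2) * (t + 1) := by
    simpa using Nat.choose_succ_right_eq (t + 2) 1
  have hk := lt_choose_two_mul_sq t (k - t)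
  rw [Nat.add_sub_cancel' (by omega)] at hk
  have hbase : (t + 2).choose 2 * (3 * s + 2 * (k - t + 1) ^ 2) + k + 1 ≤ n := by nlinarith
  have hstep : (t + 3) * (s + (k - t + 1) ^ 2) + k ≤ n := by
    have h3c : 2 * t + 4 ≤ 3 * (t + 2).choose 2 := by nlinarith
    have hkA : k ≤ (t + 1) * (s + (k - t + 1) ^ 2) := by
      obtain ⟨a, rfl⟩ : ∃ a, k = t + a := ⟨k - t, by omega⟩
      rw [Nat.add_sub_cancel_left]
      have := Nat.mul_le_mul_left (t + 1) (show a + 1 ≤ s + (a + 1) ^ 2 by nlinarith)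
      nlinarith
    calc (t + 3) * (s + (k - t + 1) ^ 2) + k ≤ (2 * t + 4) * (s + (k - t + 1) ^ 2) := by nlinarith
      _ ≤ 3 * (t + 2).choose 2 * ((k - t + 1) ^ 2 + s) := by nlinarith
      _ ≤ n := hn
  -- `C(m, t) * branchBound` decreases in `m`, so `m = t + 2` is the worst case.
  obtain ⟨d, hd, rfl⟩ : ∃ d, 2 ≤ d ∧ m = t + d := ⟨m - t, by omega, by omega⟩
  induction d, hd using Nat.le_induction with
  | base => exact choose_mul_branchBound_two_le ht (by omega) hbase
  | succ d hd ih =>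
    exact (choose_mul_branchBound_succ_le hd (by omega) hstep).trans (ih (by omega) (by omega))

section Extremal

variable {n k t x : ℕ} {R : Finset ℕ}

theorem insert_union_inter_Icc_lower (hx : x ∈ Icc (t + 1) (k + 1)) (hR : R ⊆ Icc (k + 2) n) :
    insert x (Icc 1 t ∪ R) ∩ Icc 1 (k + 1) = insert x (Icc 1 t) := by
  ext y
  have hyR : y ∈ R → k + 2 ≤ y ∧ y ≤ n := fun h => mem_Icc.1 (hR h)
  rw [mem_Icc] at hx
  by_cases hy : y ∈ R <;> simp [hy] <;> grind

theorem insert_union_inter_Icc_upper (hx : x ∈ Icc (t + 1) (k + 1)) (hR : R ⊆ Icc (k + 2) n) :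
    insert x (Icc 1 t ∪ R) ∩ Icc (k + 2) n = R := by
  ext y
  have hyR : y ∈ R → k + 2 ≤ y ∧ y ≤ n := fun h => mem_Icc.1 (hR h)
  rw [mem_Icc] at hx
  by_cases hy : y ∈ R <;> simp [hy] <;> grind

theorem insert_union_mem_powersetCard (htk : t < k) (hkn : k + 1 ≤ n)
    (hx : x ∈ Icc (t + 1) (k + 1)) (hR : R ⊆ Icc (k + 2) n) (hRcard : #R = k - t - 1) :
    insert x (Icc 1 t ∪ R) ∈ (Icc 1 n).powersetCard k := by
  rw [mem_Icc] at hx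
  have hxIR : x ∉ Icc 1 t ∪ R := fun h => by
    rcases mem_union.1 h with h | h
    · simp only [mem_Icc] at h; omega
    · have := mem_Icc.1 (hR h); omega
  have hIR : Disjoint (Icc 1 t) R := disjoint_left.2 fun y hy hyR => by
    have := mem_Icc.1 (hR hyR); simp only [mem_Icc] at hy; omega
  refine mem_powersetCard.2 ⟨fun y hy => ?_, ?_⟩
  · rcases mem_insert.1 hy with rfl | hy
    · simp only [mem_Icc]; omega
    rcases mem_union.1 hy with hy | hy
    · simp only [mem_Icc] at hy ⊢; omega
    · exact Icc_subset_Icc (by omega) le_rfl (hR hy)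
  · rw [card_insert_of_notMem hxIR, card_union_of_disjoint hIR, hRcard, Nat.card_Icc]
    omega

theorem add_one_mul_choose_le_card_filter (htk : t < k) (hkn : k + 1 ≤ n) :
    (k - t + 1) * (n - k - 1).choose (k - t - 1) ≤
      #{F ∈ (Icc 1 n).powersetCard k | Icc 1 t ⊆ F ∧ t + 1 ≤ #(F ∩ Icc 1 (k + 1))} := by
  set P := Icc (t + 1) (k + 1) ×ˢ (Icc (k + 2) n).powersetCard (k - t - 1)
  set f : ℕ × Finset ℕ → Finset ℕ := fun p => insert p.1 (Icc 1 t ∪ p.2)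
  have hP : ∀ p ∈ P, p.1 ∈ Icc (t + 1) (k + 1) ∧ p.2 ⊆ Icc (k + 2) n ∧ #p.2 = k - t - 1 :=
    fun p hp => by simpa [P, mem_product, mem_powersetCard] using hp
  calc (k - t + 1) * (n - k - 1).choose (k - t - 1) = #P := by
        simp only [P, card_product, card_powersetCard, Nat.card_Icc]
        congr 2 <;> omega
    _ = #(P.image f) := by
        refine (card_image_of_injOn fun p hp q hq hpq => ?_).symm
        replace hpq : insert p.1 (Icc 1 t ∪ p.2) = insert q.1 (Icc 1 t ∪ q.2) := hpq
        refine Prod.ext ?_ ?_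
        · have hmem : p.1 ∈ insert q.1 (Icc 1 t) := by
            rw [← insert_union_inter_Icc_lower (hP q hq).1 (hP q hq).2.1, ← hpq,
              insert_union_inter_Icc_lower (hP p hp).1 (hP p hp).2.1]
            exact mem_insert_self _ _
          have hpx := (hP p hp).1
          simp only [mem_insert, mem_Icc] at hmem hpx
          omega
        · rw [← insert_union_inter_Icc_upper (hP p hp).1 (hP p hp).2.1,
            ← insert_union_inter_Icc_upper (hP q hq).1 (hP q hq).2.1]
          exact congrArg (· ∩ Icc (k + 2) n) hpq
    _ ≤ _ := by
        refine card_le_card (image_subset_iff.2 fun p hp => ?_)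
        obtain ⟨hx, hR, hRcard⟩ := hP p hp
        refine mem_filter.2 ⟨insert_union_mem_powersetCard htk hkn hx hR hRcard,
          subset_union_left.trans (subset_insert _ _), ?_⟩
        rw [insert_union_inter_Icc_lower hx hR,
          card_insert_of_notMem (by simp only [mem_Icc] at hx ⊢; omega), Nat.card_Icc]
        omega

end Extremal

theorem stmt16_general (n k t s : ℕ) (ht : 0 < t) (hs : 0 < s)
    (hkt : t + 2 ≤ k) (hnge : 3 * Nat.choose (t + 2) 2 * ((k - t + 1) ^ 2 + s) ≤ n)
    (𝓕 : Finset (Finset ℕ)) (h𝓕 : 𝓕 ⊆ (Icc 1 n).powersetCard k)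
    (hai : almostIntersecting s t 𝓕)
    (hτ : ∀ T ⊆ Icc 1 n, isTCover t T 𝓕 → t + 2 ≤ T.card) :
    𝓕.card < hFun n k t s := by
  have hX : (k - t + 1) * k < n := by
    have := lt_choose_two_mul_sq t (k - t)
    rw [Nat.add_sub_cancel' (by omega)] at this
    nlinarith
  obtain ⟨Y, hY, hYt, hYk, hYmin, hYs⟩ := exists_almost_tCover h𝓕 hai (by omega) hτ hkt
  have hbound := card_le_add_choose_mul_branchBound h𝓕 hai (by omega) (by simpa using hX.le)
    hYmin hY hYs
  simp only [Nat.card_Icc, add_tsub_cancel_right] at hbound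
  have hextremal := choose_mul_branchBound_le ht hYt hYk hnge
  have hfamily :=
    add_one_mul_choose_le_card_filter (n := n) (k := k) (t := t) (by omega) (by nlinarith)
  unfold hFun
  omega

theorem stmt16 (n k t s : ℕ) (hn : 0 < n) (hk : 0 < k) (ht : 0 < t) (hs : 0 < s)
    (hkt : t + 2 ≤ k) (hnge : 3 * Nat.choose (t + 2) 2 * ((k - t + 1) ^ 2 + s) ≤ n)
    (𝓕 : Finset (Finset ℕ)) (h𝓕 : 𝓕 ⊆ (Icc 1 n).powersetCard k)
    (hai : almostIntersecting s t 𝓕)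
    (hτ : ∀ T ⊆ Icc 1 n, isTCover t T 𝓕 → t + 2 ≤ T.card) :
    𝓕.card < hFun n k t s :=
  stmt16_general n k t s ht hs hkt hnge 𝓕 h𝓕 hai hτ
end

section
/- Let n and t be positive integers and let A and B be (t+1)-element subsets of [n] with |A ∩ B| = t−1. Let S = A △ B (so |S| = 4), and define ℰ = {(A ∩ B) ∪ P : P a 2-element subset of S}. For i ∈ S and x ∈ [n] \ S with x ∉ A ∩ B, set X = (A ∩ B) ∪ {i, x}; for i ∈ S and x ∈ A ∩ B, set X = (A ∪ B) \ {i, x}. Then in both cases exactly 3 members E of ℰ satisfy |X ∩ E| < t; moreover, if x ∉ A ∪ B, these are exactly the members E ∈ ℰ with i ∉ E, and if x ∈ A ∩ B, they are exactly the members E ∈ ℰ with i ∈ E. -/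
/-!
Write `C = A ∩ B` and `S = A △ B`, so that `|C| = t - 1`, `|S| = 4` and the members of `ℰ` are
the sets `C ∪ P` with `P` a pair in `S`. In the first case `X ∩ (C ∪ P) = C ∪ ({i, x} ∩ P)` has
`t - 1` or `t` elements according as `i ∉ P` or `i ∈ P`; in the second, `X ∩ (C ∪ P)` is `C ∪ P`
with `x` and `i` removed, which has `t - 1` or `t` elements according as `i ∈ P` or `i ∉ P`.
Three of the six pairs in `S` contain `i` and three avoid it.
-/

open Finset

/-- The six-element family `ℰ = {(A ∩ B) ∪ P : P ∈ binom(A △ B, 2)}`. -/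
def famE (A B : Finset ℕ) : Finset (Finset ℕ) :=
  (((A \ B) ∪ (B \ A)).powersetCard 2).image (fun P => (A ∩ B) ∪ P)

namespace Finset

variable {α : Type*} [DecidableEq α] {C S P : Finset α} {i x : α}

lemma disjoint_injOn_union_right (s : Finset α) : {t | Disjoint s t}.InjOn (s ∪ ·) :=
  fun _ ht _ hu h => disjoint_injOn_union_left s ht hu (by simpa only [union_comm s] using h)

lemma injOn_union_powersetCard (hCS : Disjoint C S) (k : ℕ) :
    Set.InjOn (C ∪ ·) (S.powersetCard k : Set (Finset α)) :=
  (disjoint_injOn_union_right C).mono fun _ hP => hCS.mono_right (mem_powersetCard.mp hP).1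

lemma filter_notMem_powersetCard (S : Finset α) (i : α) (k : ℕ) :
    (S.powersetCard k).filter (i ∉ ·) = (S.erase i).powersetCard k := by
  ext P
  simp only [mem_filter, mem_powersetCard, subset_erase]
  tauto

lemma card_image_union_powersetCard (hCS : Disjoint C S) (k : ℕ) :
    ((S.powersetCard k).image (C ∪ ·)).card = S.card.choose k := by
  rw [card_image_of_injOn (injOn_union_powersetCard hCS k), card_powersetCard]

lemma card_filter_notMem_image_union_powersetCard (hCS : Disjoint C S) (hi : i ∈ S) (k : ℕ) :
    (((S.powersetCard k).image (C ∪ ·)).filter (i ∉ ·)).card = (S.card - 1).choose k := by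
  have hiC : i ∉ C := disjoint_right.mp hCS hi
  simp only [filter_image, mem_union, hiC, false_or, filter_notMem_powersetCard]
  rw [card_image_union_powersetCard (hCS.mono_right (erase_subset i S)), card_erase_of_mem hi]

lemma card_filter_mem_image_union_powersetCard (hCS : Disjoint C S) (hi : i ∈ S) (k : ℕ) :
    (((S.powersetCard k).image (C ∪ ·)).filter (i ∈ ·)).card =
      S.card.choose k - (S.card - 1).choose k := by
  have := card_filter_add_card_filter_not (s := (S.powersetCard k).image (C ∪ ·)) (i ∈ ·)
  rw [card_image_union_powersetCard hCS, card_filter_notMem_image_union_powersetCard hCS hi] at this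
  omega

lemma card_union_pair_inter_union_lt_iff (hCP : Disjoint C P) (hxP : x ∉ P) :
    ((C ∪ {i, x}) ∩ (C ∪ P)).card < C.card + 1 ↔ i ∉ P := by
  rw [← union_inter_distrib_left, card_union_of_disjoint (hCP.mono_right inter_subset_right),
    add_lt_add_iff_left, Nat.lt_one_iff, card_eq_zero, ← disjoint_iff_inter_eq_empty,
    disjoint_insert_left, disjoint_singleton_left]
  tauto

lemma card_union_sdiff_pair_inter_union_lt_iff (hCS : Disjoint C S) (hP : P ⊆ S)
    (hPcard : P.card = 2) (hi : i ∈ S) (hx : x ∈ C) :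
    (((C ∪ S) \ {i, x}) ∩ (C ∪ P)).card < C.card + 1 ↔ i ∈ P := by
  have hiC : i ∉ C := disjoint_right.mp hCS hi
  have hxi : x ≠ i := by rintro rfl; exact hiC hx
  have hE : ((C ∪ S) \ {i, x}) ∩ (C ∪ P) = ((C ∪ P).erase x).erase i := by
    rw [sdiff_inter_right_comm, inter_eq_right.mpr (union_subset_union_right hP), sdiff_insert,
      sdiff_singleton_eq_erase]
  have hCP : ((C ∪ P).erase x).card = C.card + 1 := by
    rw [card_erase_of_mem (mem_union_left P hx), card_union_of_disjoint (hCS.mono_right hP), hPcard]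
    rfl
  have hiE : i ∈ (C ∪ P).erase x ↔ i ∈ P := by simp [hxi.symm, hiC]
  rw [hE, card_erase_eq_ite, hCP, ← hiE]
  split_ifs with h
  · exact iff_of_true (by omega) h
  · exact iff_of_false (by omega) h

end Finset

theorem stmt19_general (n t : ℕ) (ht : 0 < t)
    (A B : Finset ℕ)
    (hA : A ∈ (Icc 1 n).powersetCard (t + 1)) (hB : B ∈ (Icc 1 n).powersetCard (t + 1))
    (hAB : (A ∩ B).card = t - 1) :
    (∀ i ∈ (A \ B) ∪ (B \ A), ∀ x ∈ Icc 1 n,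
      x ∉ (A \ B) ∪ (B \ A) → x ∉ A ∩ B →
        ((famE A B).filter (fun E => (((A ∩ B) ∪ {i, x}) ∩ E).card < t)).card = 3 ∧
        (famE A B).filter (fun E => (((A ∩ B) ∪ {i, x}) ∩ E).card < t) =
          (famE A B).filter (fun E => i ∉ E)) ∧
    (∀ i ∈ (A \ B) ∪ (B \ A), ∀ x ∈ A ∩ B,
        ((famE A B).filter (fun E => (((A ∪ B) \ {i, x}) ∩ E).card < t)).card = 3 ∧
        (famE A B).filter (fun E => (((A ∪ B) \ {i, x}) ∩ E).card < t) =
          (famE A B).filter (fun E => i ∈ E)) := by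
  have hAcard := (mem_powersetCard.mp hA).2
  have hBcard := (mem_powersetCard.mp hB).2
  have hCS : Disjoint (A ∩ B) ((A \ B) ∪ (B \ A)) := (disjoint_symmDiff_inf A B).symm
  have hS : ((A \ B) ∪ (B \ A)).card = 4 := by
    have hA' := card_sdiff_add_card_inter A B
    have hB' := card_sdiff_add_card_inter B A
    rw [inter_comm] at hB'
    rw [card_union_of_disjoint disjoint_sdiff_sdiff]
    omega
  have htC : t = (A ∩ B).card + 1 := by omega
  have hU : A ∪ B = (A ∩ B) ∪ ((A \ B) ∪ (B \ A)) := by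
    rw [union_comm (A ∩ B)]
    exact (symmDiff_sup_inf A B).symm
  refine ⟨fun i hi x _ hxS _ => ?_, fun i hi x hx => ?_⟩
  · have hfilter : (famE A B).filter (fun E => (((A ∩ B) ∪ {i, x}) ∩ E).card < t) =
        (famE A B).filter (fun E => i ∉ E) :=
      filter_congr <| forall_mem_image.mpr fun P hP => by
        rw [mem_powersetCard] at hP
        rw [htC, mem_union, or_iff_right (disjoint_right.mp hCS hi)]
        exact card_union_pair_inter_union_lt_iff (hCS.mono_right hP.1) fun h => hxS (hP.1 h)
    refine ⟨?_, hfilter⟩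
    rw [hfilter, famE, card_filter_notMem_image_union_powersetCard hCS hi, hS]
    rfl
  · have hfilter : (famE A B).filter (fun E => (((A ∪ B) \ {i, x}) ∩ E).card < t) =
        (famE A B).filter (fun E => i ∈ E) :=
      filter_congr <| forall_mem_image.mpr fun P hP => by
        rw [mem_powersetCard] at hP
        rw [htC, hU, mem_union, or_iff_right (disjoint_right.mp hCS hi)]
        exact card_union_sdiff_pair_inter_union_lt_iff hCS hP.1 hP.2 hi hx
    refine ⟨?_, hfilter⟩
    rw [hfilter, famE, card_filter_mem_image_union_powersetCard hCS hi, hS]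
    rfl

theorem stmt19 (n t : ℕ) (hn : 0 < n) (ht : 0 < t)
    (A B : Finset ℕ)
    (hA : A ∈ (Icc 1 n).powersetCard (t + 1)) (hB : B ∈ (Icc 1 n).powersetCard (t + 1))
    (hAB : (A ∩ B).card = t - 1) :
    (∀ i ∈ (A \ B) ∪ (B \ A), ∀ x ∈ Icc 1 n,
      x ∉ (A \ B) ∪ (B \ A) → x ∉ A ∩ B →
        ((famE A B).filter (fun E => (((A ∩ B) ∪ {i, x}) ∩ E).card < t)).card = 3 ∧
        (famE A B).filter (fun E => (((A ∩ B) ∪ {i, x}) ∩ E).card < t) =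
          (famE A B).filter (fun E => i ∉ E)) ∧
    (∀ i ∈ (A \ B) ∪ (B \ A), ∀ x ∈ A ∩ B,
        ((famE A B).filter (fun E => (((A ∪ B) \ {i, x}) ∩ E).card < t)).card = 3 ∧
        (famE A B).filter (fun E => (((A ∪ B) \ {i, x}) ∩ E).card < t) =
          (famE A B).filter (fun E => i ∈ E)) :=
  stmt19_general n t ht A B hA hB hAB
end
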